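/- arXiv:1809.08475 — 6 statements merged into one kernel-verified Lean document; each statement's English description precedes it below -/
import Mathlib

section
/- Let D be the infinite dihedral group, generated by elements b and α with b² = 1, b α b⁻¹ = α⁻¹, and α of infinite order. Let d ≥ 2 and let k ≤ n be integers with d^{n−k} ≥ 3. Set G_k = ⟨b, α^{d^k}⟩ and Gₙ = ⟨b, α^{dⁿ}⟩, so that Gₙ ⊆ G_k. Then the normal core of Gₙ computed inside G_k equals ⟨α^{dⁿ}⟩ (in particular it is independent of k), and the quotient Gₙ/⟨α^{dⁿ}⟩ has exactly two elements. -/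
theorem dihedral_conj {D : Type*} [Group D] {b c : D} (hc : b * c * b⁻¹ = c⁻¹) :
    ∀ i : ℤ, b * c ^ i * b⁻¹ = c ^ (-i) := by
  intro i
  have h1 : (MulAut.conj b) c = c⁻¹ := hc
  have : (MulAut.conj b) (c ^ i) = ((MulAut.conj b) c) ^ i := map_zpow _ _ _
  rw [h1, inv_zpow, ← zpow_neg] at this
  exact this

theorem dihedral_mem {D : Type*} [Group D] {b c : D} (hb : b ^ 2 = 1)
    (hc : b * c * b⁻¹ = c⁻¹) (x : D) :
    x ∈ Subgroup.closure {b, c} ↔ ∃ i : ℤ, x = c ^ i ∨ x = b * c ^ i := by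
  have hbb2 : b * b = 1 := by rw [← sq]; exact hb
  have hbb : b⁻¹ = b := inv_eq_of_mul_eq_one_left hbb2
  have key : ∀ i : ℤ, b * c ^ i = c ^ (-i) * b := by
    intro i
    have h := dihedral_conj hc i
    rw [hbb] at h
    calc b * c ^ i = b * c ^ i * b * b := by rw [mul_assoc, hbb2, mul_one]
    _ = c ^ (-i) * b := by rw [h]
  have key2 : ∀ i : ℤ, c ^ i * b = b * c ^ (-i) := by
    intro i
    rw [key (-i), neg_neg]
  let T : Subgroup D :=
  { carrier := {x | ∃ i : ℤ, x = c ^ i ∨ x = b * c ^ i}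
    one_mem' := ⟨0, Or.inl (by simp)⟩
    mul_mem' := by
      rintro x y ⟨i, hi | hi⟩ ⟨j, hj | hj⟩ <;> subst hi <;> subst hj
      · exact ⟨i + j, Or.inl (by rw [zpow_add])⟩
      · refine ⟨j - i, Or.inr ?_⟩
        rw [← mul_assoc, key2 i, mul_assoc, ← zpow_add]
        ring_nf
      · exact ⟨i + j, Or.inr (by rw [zpow_add, mul_assoc])⟩
      · refine ⟨j - i, Or.inl ?_⟩
        rw [mul_assoc, ← mul_assoc (c ^ i), key2 i, ← mul_assoc, ← mul_assoc,
          hbb2, one_mul, ← zpow_add]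
        ring_nf
    inv_mem' := by
      rintro x ⟨i, hi | hi⟩ <;> subst hi
      · exact ⟨-i, Or.inl (by rw [← zpow_neg])⟩
      · refine ⟨i, Or.inr ?_⟩
        rw [mul_inv_rev, hbb, ← zpow_neg, key2 (-i), neg_neg] }
  constructor
  · intro hx
    have hle : Subgroup.closure {b, c} ≤ T := by
      rw [Subgroup.closure_le]
      rintro y (rfl | rfl)
      · exact ⟨0, Or.inr (by simp)⟩
      · exact ⟨1, Or.inl (by simp)⟩
    exact hle hx
  · rintro ⟨i, rfl | rfl⟩
    · exact Subgroup.zpow_mem _ (Subgroup.subset_closure (by simp)) i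
    · exact Subgroup.mul_mem _ (Subgroup.subset_closure (by simp))
        (Subgroup.zpow_mem _ (Subgroup.subset_closure (by simp)) i)

/-- In the infinite dihedral group `D = ⟨b, α ∣ b² = 1, bαb⁻¹ = α⁻¹⟩` (with `α` of infinite
order), for `d ≥ 2` and `k ≤ n` with `d^(n-k) ≥ 3`, the normal core of `Gₙ = ⟨b, α^{dⁿ}⟩`
computed inside `G_k = ⟨b, α^{d^k}⟩` is `⟨α^{dⁿ}⟩` (independently of `k`), and the quotient
`Gₙ/⟨α^{dⁿ}⟩` has exactly two elements. -/
theorem stmt4 {D : Type*} [Group D] (b a : D)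
    (hb : b ^ 2 = 1) (hrel : b * a * b⁻¹ = a⁻¹) (ha : ¬ IsOfFinOrder a)
    (hgen : Subgroup.closure {b, a} = (⊤ : Subgroup D))
    (d k n : ℕ) (hd : 2 ≤ d) (hkn : k ≤ n) (hdn : 3 ≤ d ^ (n - k)) :
    ((Subgroup.closure {b, a ^ d ^ n}).subgroupOf
        (Subgroup.closure {b, a ^ d ^ k})).normalCore
      = (Subgroup.zpowers (a ^ d ^ n)).subgroupOf (Subgroup.closure {b, a ^ d ^ k}) ∧
    Nat.card ((Subgroup.closure {b, a ^ d ^ n} : Subgroup D) ⧸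
      (Subgroup.zpowers (a ^ d ^ n)).subgroupOf (Subgroup.closure {b, a ^ d ^ n})) = 2 := by
  have inj : Function.Injective (fun i : ℤ => a ^ i) :=
    injective_zpow_iff_not_isOfFinOrder.mpr ha
  have hbb2 : b * b = 1 := by rw [← sq]; exact hb
  have hbb : b⁻¹ = b := inv_eq_of_mul_eq_one_left hbb2
  have hrelM : ∀ M : ℕ, b * a ^ M * b⁻¹ = (a ^ M)⁻¹ := by
    intro M
    have h := dihedral_conj hrel (M : ℤ)
    rw [zpow_natCast] at h
    rw [h, zpow_neg, zpow_natCast]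
  have hpz : ∀ (M : ℕ) (i : ℤ), (a ^ M) ^ i = a ^ ((M : ℤ) * i) := by
    intro M i
    rw [← zpow_natCast a M, ← zpow_mul]
  have hane : ∀ i j : ℤ, a ^ i ≠ b * a ^ j := by
    intro i j h
    have hb1 : b = a ^ (i - j) := by
      rw [zpow_sub, h]; group
    have h2 : a ^ ((i - j) + (i - j)) = a ^ (0 : ℤ) := by
      rw [zpow_add, ← hb1, hbb2, zpow_zero]
    have h3 := inj h2
    have hij : i = j := by omega
    rw [hij, sub_self, zpow_zero] at hb1
    rw [hb1] at hrel
    have h4 : a ^ (2 : ℤ) = a ^ (0 : ℤ) := by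
      simp only [one_mul, inv_one, mul_one] at hrel
      rw [zpow_two, zpow_zero]
      nth_rewrite 2 [hrel]
      rw [mul_inv_cancel]
    have := inj h4
    omega
  set K := Subgroup.closure {b, a ^ d ^ k} with hK
  set N := Subgroup.closure {b, a ^ d ^ n} with hN
  have memK : ∀ x, x ∈ K ↔ ∃ i : ℤ, x = (a ^ d ^ k) ^ i ∨ x = b * (a ^ d ^ k) ^ i :=
    dihedral_mem hb (hrelM _)
  have memN : ∀ x, x ∈ N ↔ ∃ i : ℤ, x = (a ^ d ^ n) ^ i ∨ x = b * (a ^ d ^ n) ^ i :=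
    dihedral_mem hb (hrelM _)
  have memD : ∀ x : D, ∃ i : ℤ, x = a ^ i ∨ x = b * a ^ i := by
    intro x
    have : x ∈ Subgroup.closure {b, a} := hgen ▸ Subgroup.mem_top x
    rw [dihedral_mem hb hrel] at this
    simpa using this
  -- zpowers (a ^ d ^ n) is normal in D
  have hnormal : (Subgroup.zpowers (a ^ d ^ n)).Normal := by
    constructor
    intro x hx g
    rcases hx with ⟨i, rfl⟩
    rcases memD g with ⟨s, rfl | rfl⟩
    · refine ⟨i, ?_⟩
      show (a ^ d ^ n) ^ i = a ^ s * (a ^ d ^ n) ^ i * (a ^ s)⁻¹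
      rw [hpz]
      group
    · refine ⟨-i, ?_⟩
      show (a ^ d ^ n) ^ (-i) = b * a ^ s * (a ^ d ^ n) ^ i * (b * a ^ s)⁻¹
      rw [hpz, hpz]
      have hcal : b * a ^ s * a ^ (((d ^ n : ℕ) : ℤ) * i) * (b * a ^ s)⁻¹
          = b * a ^ (((d ^ n : ℕ) : ℤ) * i) * b⁻¹ := by group
      rw [hcal, dihedral_conj hrel, mul_neg]
  have key2 : ∀ t : ℤ, a ^ t * b = b * a ^ (-t) := by
    intro t
    have h := dihedral_conj hrel (-t)
    rw [neg_neg] at h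
    rw [← h]; group
  have hsplit : (d : ℕ) ^ n = d ^ k * d ^ (n - k) := by
    rw [← pow_add]; congr 1; omega
  have hzleN : Subgroup.zpowers (a ^ d ^ n) ≤ N :=
    Subgroup.zpowers_le.mpr (Subgroup.subset_closure (by simp))
  have hbN : b ∈ N := Subgroup.subset_closure (by simp)
  constructor
  · apply le_antisymm
    · rintro ⟨x, hxK⟩ hx
      have hx0 : x ∈ N := by
        have h1 := Subgroup.normalCore_le _ hx
        rwa [Subgroup.mem_subgroupOf] at h1
      rw [Subgroup.mem_subgroupOf]
      rcases (memN x).1 hx0 with ⟨i, rfl | rfl⟩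
      · exact ⟨i, rfl⟩
      · exfalso
        have hgK : a ^ d ^ k ∈ K := Subgroup.subset_closure (by simp)
        have hconj : (⟨a ^ d ^ k, hgK⟩ : K) * ⟨_, hxK⟩ * (⟨a ^ d ^ k, hgK⟩ : K)⁻¹
            ∈ N.subgroupOf K := hx _
        rw [Subgroup.mem_subgroupOf] at hconj
        have hc2 : a ^ d ^ k * (b * (a ^ d ^ n) ^ i) * (a ^ d ^ k)⁻¹ ∈ N := hconj
        have hform : a ^ d ^ k * (b * (a ^ d ^ n) ^ i) * (a ^ d ^ k)⁻¹
            = b * a ^ (((d ^ n : ℕ) : ℤ) * i - 2 * ((d ^ k : ℕ) : ℤ)) := by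
          rw [hpz, ← zpow_natCast a (d ^ k)]
          calc a ^ ((d ^ k : ℕ) : ℤ) * (b * a ^ (((d ^ n : ℕ) : ℤ) * i))
              * (a ^ ((d ^ k : ℕ) : ℤ))⁻¹
              = (a ^ ((d ^ k : ℕ) : ℤ) * b) * (a ^ (((d ^ n : ℕ) : ℤ) * i)
                * (a ^ ((d ^ k : ℕ) : ℤ))⁻¹) := by group
            _ = (b * a ^ (-((d ^ k : ℕ) : ℤ))) * (a ^ (((d ^ n : ℕ) : ℤ) * i)
                * (a ^ ((d ^ k : ℕ) : ℤ))⁻¹) := by rw [key2]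
            _ = b * a ^ (((d ^ n : ℕ) : ℤ) * i - 2 * ((d ^ k : ℕ) : ℤ)) := by group
        rw [hform] at hc2
        rcases (memN _).1 hc2 with ⟨j, hj | hj⟩
        · rw [hpz] at hj
          exact hane _ _ hj.symm
        · rw [hpz] at hj
          have h5 : a ^ (((d ^ n : ℕ) : ℤ) * i - 2 * ((d ^ k : ℕ) : ℤ))
              = a ^ (((d ^ n : ℕ) : ℤ) * j) := mul_left_cancel hj
          have h6 := inj h5
          have hcast : ((d ^ n : ℕ) : ℤ) = ((d ^ k : ℕ) : ℤ) * ((d ^ (n - k) : ℕ) : ℤ) := by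
            rw [hsplit, Nat.cast_mul]
          rw [hcast] at h6
          have hdkpos : (0 : ℤ) < ((d ^ k : ℕ) : ℤ) := by positivity
          have h7 : ((d ^ k : ℕ) : ℤ) * (((d ^ (n - k) : ℕ) : ℤ) * (i - j))
              = ((d ^ k : ℕ) : ℤ) * 2 := by linear_combination h6
          have h8 : ((d ^ (n - k) : ℕ) : ℤ) * (i - j) = 2 :=
            mul_left_cancel₀ (ne_of_gt hdkpos) h7
          have h9 : ((d ^ (n - k) : ℕ) : ℤ) ≤ 2 :=
            Int.le_of_dvd (by norm_num) ⟨i - j, h8.symm⟩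
          have : (3 : ℤ) ≤ ((d ^ (n - k) : ℕ) : ℤ) := by exact_mod_cast hdn
          omega
    · haveI hnor : ((Subgroup.zpowers (a ^ d ^ n)).subgroupOf K).Normal :=
        hnormal.subgroupOf K
      apply Subgroup.normal_le_normalCore.mpr
      intro x hxm
      rw [Subgroup.mem_subgroupOf] at hxm ⊢
      exact hzleN hxm
  · rw [Nat.card_eq_two_iff]
    refine ⟨QuotientGroup.mk ⟨1, N.one_mem⟩, QuotientGroup.mk ⟨b, hbN⟩, ?_, ?_⟩
    · intro hcontra
      rw [QuotientGroup.eq, Subgroup.mem_subgroupOf] at hcontra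
      have hc : b ∈ Subgroup.zpowers (a ^ d ^ n) := by simpa using hcontra
      rcases hc with ⟨j, hj⟩
      have hj2 : (a ^ d ^ n) ^ j = b := hj
      rw [hpz] at hj2
      exact hane (((d ^ n : ℕ) : ℤ) * j) 0 (by rw [zpow_zero, mul_one, hj2])
    · rw [Set.eq_univ_iff_forall]
      intro q
      refine QuotientGroup.induction_on q ?_
      intro z
      rcases (memN (z : D)).1 z.2 with ⟨i, hz | hz⟩
      · left
        symm
        rw [QuotientGroup.eq, Subgroup.mem_subgroupOf]
        have : ((⟨1, N.one_mem⟩ : N)⁻¹ * z : N) = z := by simp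
        rw [this]
        exact ⟨i, hz.symm⟩
      · right
        rw [Set.mem_singleton_iff]
        symm
        rw [QuotientGroup.eq, Subgroup.mem_subgroupOf]
        have hcoe : (((⟨b, hbN⟩ : N)⁻¹ * z : N) : D) = b⁻¹ * z := rfl
        rw [hcoe, hz, hbb, ← mul_assoc, hbb2, one_mul]
        exact ⟨i, rfl⟩
end

section
/- The maps a and b are well-defined homeomorphisms of X = (Fin d)^ℕ satisfying a² = b² = id, and the composition b∘a has infinite order in Homeo(X); consequently the subgroup ⟨a, b⟩ of Homeo(X) (the iterated monodromy group IMG(T_d) of the degree-d Chebyshev polynomial) is isomorphic to the infinite dihedral group. -/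
/-- The group of self-homeomorphisms of a topological space, with composition
`(f * g) x = f (g x)`. -/
instance homeoGroup {X : Type*} [TopologicalSpace X] : Group (X ≃ₜ X) where
  mul f g := g.trans f
  one := Homeomorph.refl X
  inv := Homeomorph.symm
  mul_assoc _ _ _ := Homeomorph.ext fun _ => rfl
  one_mul _ := Homeomorph.ext fun _ => rfl
  mul_one _ := Homeomorph.ext fun _ => rfl
  inv_mul_cancel f := Homeomorph.ext f.symm_apply_apply

/-- Prepend the letter `v` to the sequence `x`. -/
def cons {d : ℕ} (v : Fin d) (x : ℕ → Fin d) : ℕ → Fin d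
  | 0 => v
  | n + 1 => x n

/-- The permutation `τ` of `{0,…,d-1}`: the product of the transpositions
`(0 1)(2 3)⋯` of consecutive pairs (the last letter is fixed when `d` is odd). -/
def tauPerm (d : ℕ) (v : Fin d) : Fin d :=
  if (v : ℕ) % 2 = 0 then
    (if h : (v : ℕ) + 1 < d then ⟨(v : ℕ) + 1, h⟩ else v)
  else ⟨(v : ℕ) - 1, lt_of_le_of_lt (Nat.sub_le _ _) v.isLt⟩

/-- The permutation `σ` of `{0,…,d-1}`: the product of the transpositions
`(1 2)(3 4)⋯` of consecutive pairs starting from `1` (the last letter is fixed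
when `d` is even; `0` is always fixed). -/
def sigmaPerm (d : ℕ) (v : Fin d) : Fin d :=
  if (v : ℕ) = 0 then v
  else if (v : ℕ) % 2 = 1 then
    (if h : (v : ℕ) + 1 < d then ⟨(v : ℕ) + 1, h⟩ else v)
  else ⟨(v : ℕ) - 1, lt_of_le_of_lt (Nat.sub_le _ _) v.isLt⟩

/-- The recursive equations defining the generators `a`, `b` of the iterated monodromy
group of the degree-`d` Chebyshev polynomial, acting on `X = (Fin d)^ℕ`. -/
def ChebRec (d : ℕ) (a b : (ℕ → Fin d) → (ℕ → Fin d)) : Prop :=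
  (Even d →
    (∀ (v : Fin d) (w : ℕ → Fin d), a (cons v w) = cons (tauPerm d v) w) ∧
    (∀ (v : Fin d) (w : ℕ → Fin d), (v : ℕ) = 0 → b (cons v w) = cons v (b w)) ∧
    (∀ (v : Fin d) (w : ℕ → Fin d), (v : ℕ) = d - 1 → b (cons v w) = cons v (a w)) ∧
    (∀ (v : Fin d) (w : ℕ → Fin d), 0 < (v : ℕ) → (v : ℕ) < d - 1 →
      b (cons v w) = cons (sigmaPerm d v) w)) ∧
  (¬ Even d →
    (∀ (v : Fin d) (w : ℕ → Fin d), (v : ℕ) ≠ d - 1 → a (cons v w) = cons (tauPerm d v) w) ∧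
    (∀ (v : Fin d) (w : ℕ → Fin d), (v : ℕ) = d - 1 → a (cons v w) = cons v (a w)) ∧
    (∀ (v : Fin d) (w : ℕ → Fin d), (v : ℕ) = 0 → b (cons v w) = cons v (b w)) ∧
    (∀ (v : Fin d) (w : ℕ → Fin d), (v : ℕ) ≠ 0 → b (cons v w) = cons (sigmaPerm d v) w))

lemma dih {G : Type*} [Group G] (A B : G) (hA : A * A = 1) (hB : B * B = 1) (hAne : A ≠ 1)
    (hord : ∀ n : ℕ, 0 < n → (B * A) ^ n ≠ 1) :
    Nonempty ((Subgroup.closure {A, B} : Subgroup G) ≃* DihedralGroup 0) := by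
  set t : G := B * A with ht
  have hAinv : A⁻¹ = A := by rw [inv_eq_iff_mul_eq_one]; exact hA
  have hBinv : B⁻¹ = B := by rw [inv_eq_iff_mul_eq_one]; exact hB
  have htinv : t⁻¹ = A * B := by rw [ht, mul_inv_rev, hAinv, hBinv]
  have hconj : ∀ i : ℤ, A * t ^ i * A = t ^ (-i) := by
    intro i
    have h1 : A * t * A⁻¹ = t⁻¹ := by
      rw [hAinv, htinv, ht, ← mul_assoc A B A, mul_assoc (A*B) A A, hA, mul_one]
    have h2 := map_zpow (MulAut.conj A) t i
    simp only [MulAut.conj_apply] at h2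
    calc A * t ^ i * A = A * t ^ i * A⁻¹ := by rw [hAinv]
    _ = (A * t * A⁻¹) ^ i := h2
    _ = (t⁻¹) ^ i := by rw [h1]
    _ = t ^ (-i) := by rw [inv_zpow, zpow_neg]
  have hswap : ∀ i : ℤ, t ^ i * A = A * t ^ (-i) := by
    intro i
    calc t ^ i * A = (A * A) * (t ^ i * A) := by rw [hA, one_mul]
    _ = A * (A * t ^ i * A) := by group
    _ = A * t ^ (-i) := by rw [hconj]
  have htne : ∀ i : ℤ, t ^ i = 1 → i = 0 := by
    intro i hi
    rcases lt_trichotomy i 0 with h | h | h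
    · exfalso
      apply hord (-i).toNat (by omega)
      rw [← zpow_natCast, Int.toNat_of_nonneg (by omega), zpow_neg, hi, inv_one]
    · exact h
    · exfalso
      apply hord i.toNat (by omega)
      rw [← zpow_natCast, Int.toNat_of_nonneg (by omega), hi]
  let z : ZMod 0 → ℤ := fun i => i
  have hzadd : ∀ i j : ZMod 0, z (i + j) = z i + z j := fun _ _ => rfl
  have hzsub : ∀ i j : ZMod 0, z (i - j) = z i - z j := fun _ _ => rfl
  let f : DihedralGroup 0 → G := fun g => match g with
    | .r i => t ^ z i
    | .sr i => A * t ^ z i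
  have hmul : ∀ x y : DihedralGroup 0, f (x * y) = f x * f y := by
    intro x y
    cases x with
    | r i => cases y with
      | r j =>
        show t ^ z (i + j) = t ^ z i * t ^ z j
        rw [hzadd, zpow_add]
      | sr j =>
        show A * t ^ z (j - i) = t ^ z i * (A * t ^ z j)
        rw [← mul_assoc, hswap, mul_assoc, ← zpow_add, hzsub]
        ring_nf
    | sr i => cases y with
      | r j =>
        show A * t ^ z (i + j) = A * t ^ z i * t ^ z j
        rw [hzadd, zpow_add, mul_assoc]
      | sr j =>
        show t ^ z (j - i) = A * t ^ z i * (A * t ^ z j)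
        rw [mul_assoc, ← mul_assoc (t ^ z i), hswap, ← mul_assoc, ← mul_assoc, hA, one_mul,
          ← zpow_add, hzsub]
        ring_nf
  let φ : DihedralGroup 0 →* G := MonoidHom.mk' f hmul
  have hAeq : φ (.sr 0) = A := by
    show A * t ^ z 0 = A
    rw [show z 0 = 0 from rfl, zpow_zero, mul_one]
  have hBeq : φ (.sr (-1)) = B := by
    show A * t ^ z (-1) = B
    rw [show z (-1) = -1 from rfl, zpow_neg, zpow_one, htinv, ← mul_assoc, hA, one_mul]
  have hmem : ∀ g : DihedralGroup 0, φ g ∈ Subgroup.closure {A, B} := by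
    have hAm : A ∈ Subgroup.closure ({A, B} : Set G) := Subgroup.subset_closure (by simp)
    have hBm : B ∈ Subgroup.closure ({A, B} : Set G) := Subgroup.subset_closure (by simp)
    have htm : ∀ i : ℤ, t ^ i ∈ Subgroup.closure ({A, B} : Set G) :=
      fun i => zpow_mem (mul_mem hBm hAm) i
    intro g
    cases g with
    | r i => exact htm _
    | sr i => exact mul_mem hAm (htm _)
  have hinj : Function.Injective φ := by
    rw [injective_iff_map_eq_one]
    intro g hg
    cases g with
    | r i =>
      have h0 : z i = 0 := htne _ hg
      show DihedralGroup.r i = DihedralGroup.r 0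
      rw [show i = (0 : ZMod 0) from h0]
    | sr i =>
      exfalso
      have hg' : A * t ^ z i = 1 := hg
      have h1 : t ^ z i = A := by
        rw [← hAinv]
        exact (inv_eq_of_mul_eq_one_right hg').symm
      have h2 : t ^ (z i + z i) = 1 := by rw [zpow_add, h1, hA]
      have h3 : z i = 0 := by have := htne _ h2; omega
      rw [h3, zpow_zero] at h1
      exact hAne h1.symm
  let φ' : DihedralGroup 0 →* (Subgroup.closure ({A, B} : Set G)) :=
    φ.codRestrict _ hmem
  have hbij : Function.Bijective φ' := by
    constructor
    · intro x y hxy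
      apply hinj
      exact congrArg Subtype.val hxy
    · rintro ⟨y, hy⟩
      have hle : Subgroup.closure ({A, B} : Set G) ≤ φ.range := by
        rw [Subgroup.closure_le]
        rintro x (rfl | rfl)
        · exact ⟨.sr 0, hAeq⟩
        · exact ⟨.sr (-1), hBeq⟩
      obtain ⟨g, hg⟩ := hle hy
      exact ⟨g, Subtype.ext hg⟩
  exact ⟨(MulEquiv.ofBijective φ' hbij).symm⟩

-- ### preliminaries
namespace ChebAux
variable {d : ℕ}

lemma cons_zero (v : Fin d) (w : ℕ → Fin d) : cons v w 0 = v := rfl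
lemma cons_succ (v : Fin d) (w : ℕ → Fin d) (n : ℕ) : cons v w (n + 1) = w n := rfl
lemma tail_cons (v : Fin d) (w : ℕ → Fin d) : (fun k => cons v w (k + 1)) = w := rfl
lemma cons_decomp (x : ℕ → Fin d) : x = cons (x 0) (fun k => x (k + 1)) := by
  funext n; cases n <;> rfl

lemma tau_coe (v : Fin d) : ((tauPerm d v : Fin d) : ℕ) =
    if (v : ℕ) % 2 = 0 then (if (v : ℕ) + 1 < d then (v : ℕ) + 1 else (v : ℕ)) else (v : ℕ) - 1 := by
  unfold tauPerm
  split_ifs <;> simp_all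

lemma sigma_coe (v : Fin d) : ((sigmaPerm d v : Fin d) : ℕ) =
    if (v : ℕ) = 0 then 0
    else if (v : ℕ) % 2 = 1 then (if (v : ℕ) + 1 < d then (v : ℕ) + 1 else (v : ℕ))
    else (v : ℕ) - 1 := by
  unfold sigmaPerm
  split_ifs <;> simp_all

lemma tau_tau (v : Fin d) : tauPerm d (tauPerm d v) = v := by
  have hv := v.isLt
  apply Fin.ext
  rw [tau_coe, tau_coe]
  split_ifs <;> first | omega | exact False.elim (by assumption)

lemma sigma_sigma (v : Fin d) : sigmaPerm d (sigmaPerm d v) = v := by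
  have hv := v.isLt
  apply Fin.ext
  rw [sigma_coe, sigma_coe]
  split_ifs <;> first | omega | exact False.elim (by assumption)

lemma tau_ne (ho : ¬ Even d) (v : Fin d) (hv : (v : ℕ) ≠ d - 1) :
    (tauPerm d v : ℕ) ≠ d - 1 := by
  have hv' := v.isLt
  have hd2 : d % 2 = 1 := by rw [Nat.even_iff] at ho; omega
  rw [tau_coe]; split_ifs <;> first | omega | exact False.elim (by assumption)

lemma sigma_ne_zero (v : Fin d) (hv : (v : ℕ) ≠ 0) : (sigmaPerm d v : ℕ) ≠ 0 := by
  have hv' := v.isLt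
  rw [sigma_coe]; split_ifs <;> first | omega | exact False.elim (by assumption)

lemma sigma_lt (he : Even d) (v : Fin d) (h0 : 0 < (v : ℕ)) (h1 : (v : ℕ) < d - 1) :
    (sigmaPerm d v : ℕ) < d - 1 := by
  have hv' := v.isLt
  have hd2 : d % 2 = 0 := Nat.even_iff.mp he
  rw [sigma_coe]; split_ifs <;> first | omega | exact False.elim (by assumption)

-- ### explicit construction
def aCo (d : ℕ) : ℕ → (ℕ → Fin d) → Fin d
  | 0, x => if ¬ Even d ∧ (x 0 : ℕ) = d - 1 then x 0 else tauPerm d (x 0)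
  | n + 1, x => if ¬ Even d ∧ (x 0 : ℕ) = d - 1 then aCo d n (fun k => x (k + 1)) else x (n + 1)

def bCo (d : ℕ) : ℕ → (ℕ → Fin d) → Fin d
  | 0, x => if (x 0 : ℕ) = 0 then x 0
      else if Even d ∧ (x 0 : ℕ) = d - 1 then x 0
      else sigmaPerm d (x 0)
  | n + 1, x => if (x 0 : ℕ) = 0 then bCo d n (fun k => x (k + 1))
      else if Even d ∧ (x 0 : ℕ) = d - 1 then aCo d n (fun k => x (k + 1))
      else x (n + 1)

lemma chebRec_exists (hd : 2 ≤ d) :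
    ChebRec d (fun x n => aCo d n x) (fun x n => bCo d n x) := by
  constructor
  · intro he
    refine ⟨?_, ?_, ?_, ?_⟩
    · intro v w
      funext n
      cases n with
      | zero => simp [aCo, he, cons_zero]
      | succ m => simp [aCo, he, cons_succ]
    · intro v w hv
      funext n
      cases n with
      | zero => simp [bCo, cons_zero, cons_succ, hv]
      | succ m => simp [bCo, cons_zero, cons_succ, hv, tail_cons]
    · intro v w hv
      have hv0 : (v : ℕ) ≠ 0 := by omega
      have h10 : ¬ (d - 1 = 0) := by omega
      funext n
      cases n with
      | zero => simp [bCo, cons_zero, hv, hv0, he, h10]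
      | succ m => simp [bCo, cons_zero, cons_succ, hv, hv0, he, h10, tail_cons]
    · intro v w h0 h1
      have hv0 : ¬ ((v : ℕ) = 0) := by omega
      have hvd : ¬ ((v : ℕ) = d - 1) := by omega
      funext n
      cases n with
      | zero => simp [bCo, cons_zero, hv0, hvd]
      | succ m => simp [bCo, cons_zero, cons_succ, hv0, hvd]
  · intro ho
    refine ⟨?_, ?_, ?_, ?_⟩
    · intro v w hv
      funext n
      cases n with
      | zero => simp [aCo, cons_zero, hv]
      | succ m => simp [aCo, cons_zero, cons_succ, hv]
    · intro v w hv
      funext n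
      cases n with
      | zero => simp [aCo, cons_zero, hv, ho]
      | succ m => simp [aCo, cons_zero, cons_succ, hv, ho, tail_cons]
    · intro v w hv
      funext n
      cases n with
      | zero => simp [bCo, cons_zero, hv]
      | succ m => simp [bCo, cons_zero, cons_succ, hv, tail_cons]
    · intro v w hv
      funext n
      cases n with
      | zero => simp [bCo, cons_zero, hv, ho]
      | succ m => simp [bCo, cons_zero, cons_succ, hv, ho]

-- ### abstract consequences of the recursion
lemma cheb_unique (hd : 2 ≤ d) {a b a' b' : (ℕ → Fin d) → (ℕ → Fin d)}
    (h : ChebRec d a b) (h' : ChebRec d a' b') :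
    ∀ n x, a x n = a' x n ∧ b x n = b' x n := by
  intro n
  induction n using Nat.strong_induction_on with
  | _ n IH =>
    intro x
    obtain ⟨v, w, rfl⟩ : ∃ v w, x = cons v w := ⟨x 0, _, cons_decomp x⟩
    have hvd := v.isLt
    by_cases he : Even d
    · obtain ⟨ha, hb0, hbd, hbm⟩ := h.1 he
      obtain ⟨ha', hb0', hbd', hbm'⟩ := h'.1 he
      refine ⟨by rw [ha, ha'], ?_⟩
      rcases eq_or_ne (v : ℕ) 0 with hv | hv
      · rw [hb0 v w hv, hb0' v w hv]
        cases n with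
        | zero => rfl
        | succ m => simpa [cons_succ] using (IH m (by omega) w).2
      · rcases eq_or_ne (v : ℕ) (d - 1) with hv1 | hv1
        · rw [hbd v w hv1, hbd' v w hv1]
          cases n with
          | zero => rfl
          | succ m => simpa [cons_succ] using (IH m (by omega) w).1
        · rw [hbm v w (by omega) (by omega), hbm' v w (by omega) (by omega)]
    · obtain ⟨ha1, had, hb0, hbn⟩ := h.2 he
      obtain ⟨ha1', had', hb0', hbn'⟩ := h'.2 he
      constructor
      · rcases eq_or_ne (v : ℕ) (d - 1) with hv | hv
        · rw [had v w hv, had' v w hv]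
          cases n with
          | zero => rfl
          | succ m => simpa [cons_succ] using (IH m (by omega) w).1
        · rw [ha1 v w hv, ha1' v w hv]
      · rcases eq_or_ne (v : ℕ) 0 with hv | hv
        · rw [hb0 v w hv, hb0' v w hv]
          cases n with
          | zero => rfl
          | succ m => simpa [cons_succ] using (IH m (by omega) w).2
        · rw [hbn v w hv, hbn' v w hv]

lemma cheb_invol (hd : 2 ≤ d) {a b : (ℕ → Fin d) → (ℕ → Fin d)} (h : ChebRec d a b) :
    ∀ n x, a (a x) n = x n ∧ b (b x) n = x n := by
  intro n
  induction n using Nat.strong_induction_on with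
  | _ n IH =>
    intro x
    obtain ⟨v, w, rfl⟩ : ∃ v w, x = cons v w := ⟨x 0, _, cons_decomp x⟩
    have hvd := v.isLt
    by_cases he : Even d
    · obtain ⟨ha, hb0, hbd, hbm⟩ := h.1 he
      refine ⟨by rw [ha, ha, tau_tau], ?_⟩
      rcases eq_or_ne (v : ℕ) 0 with hv | hv
      · rw [hb0 v w hv, hb0 v (b w) hv]
        cases n with
        | zero => rfl
        | succ m => simpa [cons_succ] using (IH m (by omega) w).2
      · rcases eq_or_ne (v : ℕ) (d - 1) with hv1 | hv1
        · rw [hbd v w hv1, hbd v (a w) hv1]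
          cases n with
          | zero => rfl
          | succ m => simpa [cons_succ] using (IH m (by omega) w).1
        · rw [hbm v w (by omega) (by omega),
            hbm (sigmaPerm d v) w
              (by have := sigma_ne_zero v (by omega); omega)
              (sigma_lt he v (by omega) (by omega)),
            sigma_sigma]
    · obtain ⟨ha1, had, hb0, hbn⟩ := h.2 he
      constructor
      · rcases eq_or_ne (v : ℕ) (d - 1) with hv | hv
        · rw [had v w hv, had v (a w) hv]
          cases n with
          | zero => rfl
          | succ m => simpa [cons_succ] using (IH m (by omega) w).1
        · rw [ha1 v w hv, ha1 (tauPerm d v) w (tau_ne he v hv), tau_tau]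
      · rcases eq_or_ne (v : ℕ) 0 with hv | hv
        · rw [hb0 v w hv, hb0 v (b w) hv]
          cases n with
          | zero => rfl
          | succ m => simpa [cons_succ] using (IH m (by omega) w).2
        · rw [hbn v w hv, hbn (sigmaPerm d v) w (sigma_ne_zero v hv), sigma_sigma]

lemma cheb_local (hd : 2 ≤ d) {a b : (ℕ → Fin d) → (ℕ → Fin d)} (h : ChebRec d a b) :
    ∀ n x y, (∀ i, i ≤ n → x i = y i) → a x n = a y n ∧ b x n = b y n := by
  intro n
  induction n using Nat.strong_induction_on with
  | _ n IH =>
    intro x y hxy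
    obtain ⟨v, w, rfl⟩ : ∃ v w, x = cons v w := ⟨x 0, _, cons_decomp x⟩
    obtain ⟨v', w', rfl⟩ : ∃ v w, y = cons v w := ⟨y 0, _, cons_decomp y⟩
    obtain rfl : v = v' := hxy 0 (by omega)
    have hvd := v.isLt
    have htail : ∀ m, m < n → ∀ i, i ≤ m → w i = w' i := by
      intro m hm i hi
      exact hxy (i + 1) (by omega)
    have hlast : ∀ m, n = m + 1 → w m = w' m := by
      intro m hm
      exact hxy (m + 1) (by omega)
    by_cases he : Even d
    · obtain ⟨ha, hb0, hbd, hbm⟩ := h.1 he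
      constructor
      · rw [ha, ha]
        cases n with
        | zero => rfl
        | succ m => simpa [cons_succ] using hlast m rfl
      · rcases eq_or_ne (v : ℕ) 0 with hv | hv
        · rw [hb0 v w hv, hb0 v w' hv]
          cases n with
          | zero => rfl
          | succ m => simpa [cons_succ] using (IH m (by omega) w w' (htail m (by omega))).2
        · rcases eq_or_ne (v : ℕ) (d - 1) with hv1 | hv1
          · rw [hbd v w hv1, hbd v w' hv1]
            cases n with
            | zero => rfl
            | succ m => simpa [cons_succ] using (IH m (by omega) w w' (htail m (by omega))).1
          · rw [hbm v w (by omega) (by omega), hbm v w' (by omega) (by omega)]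
            cases n with
            | zero => rfl
            | succ m => simpa [cons_succ] using hlast m rfl
    · obtain ⟨ha1, had, hb0, hbn⟩ := h.2 he
      constructor
      · rcases eq_or_ne (v : ℕ) (d - 1) with hv | hv
        · rw [had v w hv, had v w' hv]
          cases n with
          | zero => rfl
          | succ m => simpa [cons_succ] using (IH m (by omega) w w' (htail m (by omega))).1
        · rw [ha1 v w hv, ha1 v w' hv]
          cases n with
          | zero => rfl
          | succ m => simpa [cons_succ] using hlast m rfl
      · rcases eq_or_ne (v : ℕ) 0 with hv | hv
        · rw [hb0 v w hv, hb0 v w' hv]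
          cases n with
          | zero => rfl
          | succ m => simpa [cons_succ] using (IH m (by omega) w w' (htail m (by omega))).2
        · rw [hbn v w hv, hbn v w' hv]
          cases n with
          | zero => rfl
          | succ m => simpa [cons_succ] using hlast m rfl

lemma cont_of_local {f : (ℕ → Fin d) → (ℕ → Fin d)}
    (hf : ∀ n x y, (∀ i, i ≤ n → x i = y i) → f x n = f y n) : Continuous f := by
  apply continuous_pi
  intro n
  have hrw : (fun x => f x n) =
      (fun p : Fin (n + 1) → Fin d =>
        f (fun i => if h : i < n + 1 then p ⟨i, h⟩ else p ⟨0, Nat.succ_pos n⟩) n) ∘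
      (fun x (i : Fin (n + 1)) => x i) := by
    funext x
    simp only [Function.comp]
    apply hf
    intro i hi
    simp [Nat.lt_succ_of_le hi]
  rw [hrw]
  exact continuous_of_discreteTopology.comp (continuous_pi fun i => continuous_apply _)

lemma cheb_homeo (hd : 2 ≤ d) {a b : (ℕ → Fin d) → (ℕ → Fin d)} (h : ChebRec d a b) :
    IsHomeomorph a ∧ IsHomeomorph b := by
  have hca : Continuous a := cont_of_local (fun n x y hxy => (cheb_local hd h n x y hxy).1)
  have hcb : Continuous b := cont_of_local (fun n x y hxy => (cheb_local hd h n x y hxy).2)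
  have hia : ∀ x, a (a x) = x := fun x => funext fun n => (cheb_invol hd h n x).1
  have hib : ∀ x, b (b x) = x := fun x => funext fun n => (cheb_invol hd h n x).2
  constructor
  · exact Homeomorph.isHomeomorph ⟨⟨a, a, hia, hia⟩, hca, hca⟩
  · exact Homeomorph.isHomeomorph ⟨⟨b, b, hib, hib⟩, hcb, hcb⟩

section Steps
set_option linter.unusedSectionVars false
variable (hd : 2 ≤ d) {a b : (ℕ → Fin d) → (ℕ → Fin d)} (h : ChebRec d a b)
include hd h

lemma step1 (v : Fin d) (w : ℕ → Fin d) (hv2 : (v : ℕ) % 2 = 0) (h2 : (v : ℕ) + 2 < d)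
    (u : Fin d) (hu : (u : ℕ) = (v : ℕ) + 2) :
    b (a (cons v w)) = cons u w := by
  have hvd := v.isLt
  have ht : (tauPerm d v : ℕ) = (v : ℕ) + 1 := by rw [tau_coe]; split_ifs <;> first | omega | exact False.elim (by assumption)
  have hs : (sigmaPerm d (tauPerm d v) : ℕ) = (v : ℕ) + 2 := by
    rw [sigma_coe, ht]; split_ifs <;> first | omega | exact False.elim (by assumption)
  have hueq : u = sigmaPerm d (tauPerm d v) := Fin.ext (by rw [hs]; omega)
  by_cases he : Even d
  · obtain ⟨ha, hb0, hbd, hbm⟩ := h.1 he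
    rw [ha, hbm _ w (by omega) (by omega), hueq]
  · obtain ⟨ha1, had, hb0, hbn⟩ := h.2 he
    have hdo : d % 2 = 1 := by rw [Nat.even_iff] at he; omega
    rw [ha1 v w (by omega), hbn _ w (by omega), hueq]

lemma step2 (v : Fin d) (w : ℕ → Fin d) (hv2 : (v : ℕ) % 2 = 0) (h2 : d ≤ (v : ℕ) + 2)
    (u : Fin d) (hu : (u : ℕ) = 2 * d - 1 - ((v : ℕ) + 2)) :
    b (a (cons v w)) = cons u (a w) := by
  have hvd := v.isLt
  by_cases he : Even d
  · obtain ⟨ha, hb0, hbd, hbm⟩ := h.1 he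
    have hde : d % 2 = 0 := Nat.even_iff.mp he
    have hvv : (v : ℕ) = d - 2 := by omega
    have ht : (tauPerm d v : ℕ) = d - 1 := by rw [tau_coe]; split_ifs <;> first | omega | exact False.elim (by assumption)
    have hueq : u = tauPerm d v := Fin.ext (by rw [ht]; omega)
    rw [ha, hbd _ w ht, hueq]
  · obtain ⟨ha1, had, hb0, hbn⟩ := h.2 he
    have hdo : d % 2 = 1 := by rw [Nat.even_iff] at he; omega
    have hvv : (v : ℕ) = d - 1 := by omega
    have hs : (sigmaPerm d v : ℕ) = d - 2 := by rw [sigma_coe]; split_ifs <;> first | omega | exact False.elim (by assumption)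
    have hueq : u = sigmaPerm d v := Fin.ext (by rw [hs]; omega)
    rw [had v w hvv, hbn v (a w) (by omega), hueq]

lemma step3 (v : Fin d) (w : ℕ → Fin d) (hv2 : (v : ℕ) % 2 = 1) (h3 : 3 ≤ (v : ℕ))
    (u : Fin d) (hu : (u : ℕ) = (v : ℕ) - 2) :
    b (a (cons v w)) = cons u w := by
  have hvd := v.isLt
  have ht : (tauPerm d v : ℕ) = (v : ℕ) - 1 := by rw [tau_coe]; split_ifs <;> first | omega | exact False.elim (by assumption)
  have hs : (sigmaPerm d (tauPerm d v) : ℕ) = (v : ℕ) - 2 := by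
    rw [sigma_coe, ht]; split_ifs <;> first | omega | exact False.elim (by assumption)
  have hueq : u = sigmaPerm d (tauPerm d v) := Fin.ext (by rw [hs]; omega)
  by_cases he : Even d
  · obtain ⟨ha, hb0, hbd, hbm⟩ := h.1 he
    have hde : d % 2 = 0 := Nat.even_iff.mp he
    rw [ha, hbm _ w (by omega) (by omega), hueq]
  · obtain ⟨ha1, had, hb0, hbn⟩ := h.2 he
    have hdo : d % 2 = 1 := by rw [Nat.even_iff] at he; omega
    rw [ha1 v w (by omega), hbn _ w (by omega), hueq]

lemma step4 (v : Fin d) (w : ℕ → Fin d) (hv : (v : ℕ) = 1)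
    (u : Fin d) (hu : (u : ℕ) = 0) :
    b (a (cons v w)) = cons u (b w) := by
  have hvd := v.isLt
  have ht : (tauPerm d v : ℕ) = 0 := by rw [tau_coe]; split_ifs <;> first | omega | exact False.elim (by assumption)
  have hueq : u = tauPerm d v := Fin.ext (by rw [ht]; omega)
  by_cases he : Even d
  · obtain ⟨ha, hb0, hbd, hbm⟩ := h.1 he
    rw [ha, hb0 _ w ht, hueq]
  · obtain ⟨ha1, had, hb0, hbn⟩ := h.2 he
    have hdo : d % 2 = 1 := by rw [Nat.even_iff] at he; omega
    rw [ha1 v w (by omega), hb0 _ w ht, hueq]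

lemma cheb_cycle : ∀ r, r < d → ∀ (w : ℕ → Fin d) (u : Fin d),
    (u : ℕ) = (if 2 * r < d then 2 * r else 2 * d - 1 - 2 * r) →
    (b ∘ a)^[r] (cons (⟨0, by omega⟩ : Fin d) w) = cons u (if 2 * r < d then w else a w) := by
  intro r
  induction r with
  | zero =>
    intro _ w u hu
    have h0 : 2 * 0 < d := by omega
    rw [if_pos h0] at hu ⊢
    show cons _ w = cons u w
    funext n
    cases n with
    | zero => exact Fin.ext (by show (0 : ℕ) = (u : ℕ); omega)
    | succ m => rfl
  | succ r IHr =>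
    intro hr w u hu
    have hrd : r < d := by omega
    by_cases hc0 : 2 * r < d
    · have hu'v : ((⟨2 * r, hc0⟩ : Fin d) : ℕ) =
          (if 2 * r < d then 2 * r else 2 * d - 1 - 2 * r) := by rw [if_pos hc0]
      have hprev := IHr hrd w ⟨2 * r, hc0⟩ hu'v
      rw [if_pos hc0] at hprev
      rw [Function.iterate_succ_apply', hprev, Function.comp_apply]
      by_cases hc1 : 2 * (r + 1) < d
      · rw [if_pos hc1]
        rw [if_pos hc1] at hu
        exact step1 hd h _ w (by show 2 * r % 2 = 0; omega)
          (by show 2 * r + 2 < d; omega) u (by show (u : ℕ) = 2 * r + 2; omega)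
      · rw [if_neg hc1]
        rw [if_neg hc1] at hu
        exact step2 hd h _ w (by show 2 * r % 2 = 0; omega)
          (by show d ≤ 2 * r + 2; omega) u
          (by show (u : ℕ) = 2 * d - 1 - (2 * r + 2); omega)
    · have hc1 : ¬ (2 * (r + 1) < d) := by omega
      have hwit : 2 * d - 1 - 2 * r < d := by omega
      have hu'v : ((⟨2 * d - 1 - 2 * r, hwit⟩ : Fin d) : ℕ) =
          (if 2 * r < d then 2 * r else 2 * d - 1 - 2 * r) := by rw [if_neg hc0]
      have hprev := IHr hrd w _ hu'v
      rw [if_neg hc0] at hprev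
      rw [Function.iterate_succ_apply', hprev, Function.comp_apply, if_neg hc1]
      rw [if_neg hc1] at hu
      exact step3 hd h ⟨2 * d - 1 - 2 * r, hwit⟩ (a w)
        (by show (2 * d - 1 - 2 * r) % 2 = 1; omega)
        (by show 3 ≤ 2 * d - 1 - 2 * r; omega) u
        (by show (u : ℕ) = 2 * d - 1 - 2 * r - 2; omega)

lemma cheb_period (w : ℕ → Fin d) :
    (b ∘ a)^[d] (cons (⟨0, by omega⟩ : Fin d) w) = cons ⟨0, by omega⟩ ((b ∘ a) w) := by
  have h1 := Function.iterate_succ_apply' (b ∘ a) (d - 1) (cons (⟨0, by omega⟩ : Fin d) w)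
  rw [show (d - 1).succ = d by omega] at h1
  have hne : ¬ (2 * (d - 1) < d) := by omega
  have hone : 1 < d := by omega
  have hcyc := cheb_cycle hd h (d - 1) (by omega) w ⟨1, hone⟩
    (by rw [if_neg hne]; show (1 : ℕ) = 2 * d - 1 - 2 * (d - 1); omega)
  rw [if_neg hne] at hcyc
  rw [h1, hcyc, Function.comp_apply]
  exact step4 hd h ⟨1, hone⟩ (a w) rfl _ rfl

lemma cheb_period_mul (q : ℕ) (w : ℕ → Fin d) :
    (b ∘ a)^[d * q] (cons (⟨0, by omega⟩ : Fin d) w) =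
      cons ⟨0, by omega⟩ ((b ∘ a)^[q] w) := by
  induction q generalizing w with
  | zero => simp
  | succ q IHq =>
    have hdq : d * (q + 1) = d * q + d := by ring
    rw [hdq, Function.iterate_add_apply, cheb_period hd h, IHq,
      ← Function.iterate_succ_apply]

lemma cheb_nofix : ∀ n, (b ∘ a)^[n] (fun _ => (⟨0, by omega⟩ : Fin d)) =
    (fun _ => (⟨0, by omega⟩ : Fin d)) → n = 0 := by
  set z : ℕ → Fin d := fun _ => (⟨0, by omega⟩ : Fin d) with hzdef
  have hz : cons (⟨0, by omega⟩ : Fin d) z = z := by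
    funext n; cases n <;> rfl
  intro n
  induction n using Nat.strong_induction_on with
  | _ n IH =>
    intro hfix
    rcases Nat.eq_zero_or_pos n with h0 | h0
    · exact h0
    exfalso
    have hqd : (b ∘ a)^[d * (n / d)] z =
        cons (⟨0, by omega⟩ : Fin d) ((b ∘ a)^[n / d] z) := by
      calc (b ∘ a)^[d * (n / d)] z
          = (b ∘ a)^[d * (n / d)] (cons (⟨0, by omega⟩ : Fin d) z) := by rw [hz]
      _ = cons (⟨0, by omega⟩ : Fin d) ((b ∘ a)^[n / d] z) := cheb_period_mul hd h _ z
    have hsplit : (b ∘ a)^[n] z =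
        (b ∘ a)^[n % d] (cons (⟨0, by omega⟩ : Fin d) ((b ∘ a)^[n / d] z)) := by
      conv_lhs => rw [show n = n % d + d * (n / d) from (Nat.mod_add_div n d).symm]
      rw [Function.iterate_add_apply, hqd]
    rcases Nat.eq_zero_or_pos (n % d) with hr0 | hr0
    · rw [hr0] at hsplit
      simp only [Function.iterate_zero, id_eq] at hsplit
      have htailfix : (b ∘ a)^[n / d] z = z := by
        funext k
        exact congrFun (hsplit.symm.trans hfix) (k + 1)
      have hqlt : n / d < n := Nat.div_lt_self h0 (by omega)
      have hq0 : (n / d) = 0 := IH (n / d) hqlt htailfix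
      have h2 := Nat.mod_add_div n d
      rw [hq0, Nat.mul_zero] at h2
      omega
    · have hrlt : n % d < d := Nat.mod_lt n (by omega)
      have hwit : (if 2 * (n % d) < d then 2 * (n % d) else 2 * d - 1 - 2 * (n % d)) < d := by
        split_ifs <;> omega
      have hcyc := cheb_cycle hd h (n % d) hrlt ((b ∘ a)^[n / d] z)
        (⟨if 2 * (n % d) < d then 2 * (n % d) else 2 * d - 1 - 2 * (n % d), hwit⟩ : Fin d) rfl
      have hvz : (⟨if 2 * (n % d) < d then 2 * (n % d) else 2 * d - 1 - 2 * (n % d), hwit⟩ : Fin d) =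
          (⟨0, by omega⟩ : Fin d) := by
        have hcf := congrFun hfix 0
        rw [hsplit, hcyc] at hcf
        exact hcf
      simp only [Fin.mk.injEq] at hvz
      split_ifs at hvz <;> omega

lemma cheb_a_ne_id : a ≠ id := by
  intro ha
  have hv0 : ((⟨0, by omega⟩ : Fin d) : ℕ) = 0 := rfl
  have hz : a (cons (⟨0, by omega⟩ : Fin d) (fun _ => (⟨0, by omega⟩ : Fin d))) =
      cons (tauPerm d ⟨0, by omega⟩) (fun _ => (⟨0, by omega⟩ : Fin d)) := by
    by_cases he : Even d
    · exact (h.1 he).1 _ _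
    · exact (h.2 he).1 _ _ (by rw [hv0]; omega)
  have ht : ((tauPerm d (⟨0, by omega⟩ : Fin d)) : ℕ) = 1 := by
    rw [tau_coe, hv0]; split_ifs <;> omega
  have h0 := congrArg Fin.val (congrFun hz 0)
  rw [ha] at h0
  exact absurd (show (0 : ℕ) = ((tauPerm d (⟨0, by omega⟩ : Fin d)) : ℕ) from h0)
    (by rw [ht]; omega)

end Steps
end ChebAux

/-- The recursively defined maps `a`, `b` on `X = (Fin d)^ℕ` exist, are unique, are
homeomorphisms, satisfy `a² = b² = id`, the composition `b ∘ a` has infinite order, and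
the subgroup `⟨a, b⟩` of the homeomorphism group of `X` (the iterated monodromy group
`IMG(T_d)` of the degree-`d` Chebyshev polynomial) is isomorphic to the infinite dihedral
group. -/
theorem stmt5 (d : ℕ) (hd : 2 ≤ d) :
    (∃ a b : (ℕ → Fin d) → (ℕ → Fin d), ChebRec d a b) ∧
    (∀ a b a' b' : (ℕ → Fin d) → (ℕ → Fin d),
      ChebRec d a b → ChebRec d a' b' → a = a' ∧ b = b') ∧
    (∀ a b : (ℕ → Fin d) → (ℕ → Fin d), ChebRec d a b →
      IsHomeomorph a ∧ IsHomeomorph b ∧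
      a ∘ a = id ∧ b ∘ b = id ∧
      (∀ n : ℕ, 0 < n → (b ∘ a)^[n] ≠ id) ∧
      ∀ A B : (ℕ → Fin d) ≃ₜ (ℕ → Fin d), ⇑A = a → ⇑B = b →
        Nonempty
          ((Subgroup.closure {A, B} : Subgroup ((ℕ → Fin d) ≃ₜ (ℕ → Fin d))) ≃*
            DihedralGroup 0)) := by
  refine ⟨⟨fun x n => ChebAux.aCo d n x, fun x n => ChebAux.bCo d n x,
    ChebAux.chebRec_exists hd⟩, ?_, ?_⟩
  · intro a b a' b' h h'
    exact ⟨funext fun x => funext fun n => (ChebAux.cheb_unique hd h h' n x).1,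
           funext fun x => funext fun n => (ChebAux.cheb_unique hd h h' n x).2⟩
  · intro a b h
    obtain ⟨hha, hhb⟩ := ChebAux.cheb_homeo hd h
    refine ⟨hha, hhb,
      funext fun x => funext fun n => (ChebAux.cheb_invol hd h n x).1,
      funext fun x => funext fun n => (ChebAux.cheb_invol hd h n x).2, ?_, ?_⟩
    · intro n hn hcon
      have h0 := ChebAux.cheb_nofix hd h n (by rw [hcon]; rfl)
      omega
    · intro A B hA hB
      have hA2 : A * A = 1 := Homeomorph.ext fun x => by
        show A (A x) = x
        rw [hA]
        exact funext fun n => (ChebAux.cheb_invol hd h n x).1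
      have hB2 : B * B = 1 := Homeomorph.ext fun x => by
        show B (B x) = x
        rw [hB]
        exact funext fun n => (ChebAux.cheb_invol hd h n x).2
      have hAne : A ≠ 1 := by
        intro h1
        apply ChebAux.cheb_a_ne_id hd h
        rw [← hA, h1]
        rfl
      have hpow : ∀ (n : ℕ) (x : ℕ → Fin d), ((B * A) ^ n) x = (b ∘ a)^[n] x := by
        intro n
        induction n with
        | zero => intro x; rfl
        | succ n IH =>
          intro x
          rw [pow_succ, Function.iterate_succ_apply]
          show ((B * A) ^ n) (B (A x)) = (b ∘ a)^[n] ((b ∘ a) x)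
          rw [hA, hB]
          exact IH _
      have hord : ∀ n : ℕ, 0 < n → (B * A) ^ n ≠ 1 := by
        intro n hn hcon
        have hz : (b ∘ a)^[n] (fun _ => (⟨0, by omega⟩ : Fin d)) =
            (fun _ => (⟨0, by omega⟩ : Fin d)) := by
          rw [← hpow n, hcon]
          rfl
        exact absurd (ChebAux.cheb_nofix hd h n hz) (by omega)
      exact dih A B hA2 hB2 hAne hord
end

section
/- Let d ≥ 2 and let G be a self-similar, contracting subgroup of the group of tree automorphisms of X = (Fin d)^ℕ. If G contains a non-Hausdorff element, then the set 𝒩₁ = {g ∈ G : there is a nonempty finite word v with g(v) = v and g|_v = g} contains a non-Hausdorff element. -/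
/-- Prepend the finite word `v` to the sequence `x`. -/
def append {d : ℕ} (v : List (Fin d)) (x : ℕ → Fin d) : ℕ → Fin d :=
  fun n => if h : n < v.length then v.get ⟨n, h⟩ else x (n - v.length)

/-- `g` is level-preserving: for every `n`, the first `n` coordinates of `g x` depend
only on the first `n` coordinates of `x`. -/
def LevelPreserving {d : ℕ} (g : (ℕ → Fin d) → (ℕ → Fin d)) : Prop :=
  ∀ n : ℕ, ∀ x y : ℕ → Fin d, (∀ i < n, x i = y i) → ∀ i < n, g x i = g y i

/-- A tree automorphism of `(Fin d)^ℕ` is a level-preserving homeomorphism. -/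
def IsTreeAut {d : ℕ} (g : (ℕ → Fin d) → (ℕ → Fin d)) : Prop :=
  IsHomeomorph g ∧ LevelPreserving g

/-- The section `g|_v` of a tree automorphism `g` at the finite word `v`, determined by
`g (v·x) = g(v)·(g|_v x)`. -/
def sect {d : ℕ} (g : (ℕ → Fin d) → (ℕ → Fin d)) (v : List (Fin d)) :
    (ℕ → Fin d) → (ℕ → Fin d) :=
  fun x n => g (append v x) (n + v.length)

/-- `g` is a non-Hausdorff element: it fixes a point `x`, is not the identity on any open
neighborhood of `x`, yet every open neighborhood of `x` contains a nonempty open subset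
on which `g` is the identity. -/
def IsNonHausdorffElement {X : Type*} [TopologicalSpace X] (g : X → X) : Prop :=
  ∃ x : X, g x = x ∧
    (∀ W : Set X, IsOpen W → x ∈ W → ¬ Set.EqOn g id W) ∧
    (∀ W : Set X, IsOpen W → x ∈ W → ∃ O : Set X, IsOpen O ∧ O.Nonempty ∧ O ⊆ W ∧
      Set.EqOn g id O)

namespace StmtAux
variable {d : ℕ}

/-- The prefix of length `m` of the sequence `x`, as a finite word. -/
def pre (x : ℕ → Fin d) (m : ℕ) : List (Fin d) := List.ofFn (fun i : Fin m => x i)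

lemma pre_length (x : ℕ → Fin d) (m : ℕ) : (pre x m).length = m := by simp [pre]

lemma pre_get (x : ℕ → Fin d) (m i : ℕ) (h : i < (pre x m).length) :
    (pre x m).get ⟨i, h⟩ = x i := by simp [pre]

lemma append_lt (v : List (Fin d)) (x : ℕ → Fin d) (i : ℕ) (h : i < v.length) :
    append v x i = v.get ⟨i, h⟩ := by simp [append, h]

lemma append_ge (v : List (Fin d)) (x : ℕ → Fin d) (n : ℕ) :
    append v x (n + v.length) = x n := by
  unfold append
  rw [dif_neg (by omega)]
  congr 1
  omega

lemma append_append (v w : List (Fin d)) (x : ℕ → Fin d) :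
    append v (append w x) = append (v ++ w) x := by
  funext n
  unfold append
  by_cases h1 : n < v.length
  · rw [dif_pos h1, dif_pos (by simp; omega)]
    simp [List.getElem_append_left, h1]
  · rw [dif_neg h1]
    by_cases h2 : n - v.length < w.length
    · rw [dif_pos h2, dif_pos (by simp; omega)]
      simp only [List.get_eq_getElem]
      rw [List.getElem_append_right (show v.length ≤ n by omega)]
    · rw [dif_neg h2, dif_neg (by simp; omega)]
      congr 1
      simp
      omega

lemma sect_sect (g : (ℕ → Fin d) → (ℕ → Fin d)) (v w : List (Fin d)) :
    sect (sect g v) w = sect g (v ++ w) := by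
  funext x n
  simp only [sect]
  rw [append_append]
  congr 1
  simp
  omega

lemma append_of_cyl (v : List (Fin d)) (z : ℕ → Fin d)
    (hz : ∀ i (h : i < v.length), z i = v.get ⟨i, h⟩) :
    append v (fun n => z (n + v.length)) = z := by
  funext n
  unfold append
  by_cases h : n < v.length
  · rw [dif_pos h, hz n h]
  · rw [dif_neg h]
    show z (n - v.length + v.length) = z n
    congr 1
    omega

lemma continuous_append (v : List (Fin d)) : Continuous (append v) := by
  apply continuous_pi
  intro n
  by_cases h : n < v.length
  · simp only [append, dif_pos h]
    exact continuous_const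
  · simp only [append, dif_neg h]
    exact continuous_apply _

lemma continuous_shift (m : ℕ) : Continuous (fun (z : ℕ → Fin d) n => z (n + m)) :=
  continuous_pi fun _ => continuous_apply _

lemma isOpen_cyl (x : ℕ → Fin d) (m : ℕ) :
    IsOpen {z : ℕ → Fin d | ∀ i < m, z i = x i} := by
  have : {z : ℕ → Fin d | ∀ i < m, z i = x i} =
      ⋂ i ∈ Finset.range m, (fun z : ℕ → Fin d => z i) ⁻¹' {x i} := by
    ext z; simp
  rw [this]
  exact isOpen_biInter_finset fun i _ =>
    (isOpen_discrete _).preimage (continuous_apply i)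

lemma pre_add (x : ℕ → Fin d) (m k : ℕ) :
    pre x (m + k) = pre x m ++ (List.ofFn fun i : Fin k => x (m + i)) := by
  simp [pre, List.ofFn_add, Fin.coe_castAdd, Fin.coe_natAdd, Function.comp]

end StmtAux

/-- If a self-similar contracting group `G` of tree automorphisms of `(Fin d)^ℕ` contains
a non-Hausdorff element, then the set
`𝒩₁ = {g ∈ G : g(v) = v and g|_v = g for some nonempty finite word v}` contains a
non-Hausdorff element. -/
theorem stmt12 (d : ℕ) (hd : 2 ≤ d)
    (G : Set ((ℕ → Fin d) → (ℕ → Fin d)))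
    (haut : ∀ g ∈ G, IsTreeAut g)
    (hone : id ∈ G)
    (hmul : ∀ g ∈ G, ∀ h ∈ G, g ∘ h ∈ G)
    (hinv : ∀ g ∈ G, ∃ h ∈ G, g ∘ h = id ∧ h ∘ g = id)
    (hselfsimilar : ∀ g ∈ G, ∀ v : List (Fin d), sect g v ∈ G)
    (hcontracting : ∃ N : Set ((ℕ → Fin d) → (ℕ → Fin d)), N.Finite ∧
      ∀ g ∈ G, ∃ n : ℕ, ∀ v : List (Fin d), n ≤ v.length → sect g v ∈ N)
    (hNH : ∃ g ∈ G, IsNonHausdorffElement g) :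
    ∃ g ∈ G,
      (∃ v : List (Fin d), v ≠ [] ∧
        (∀ x : ℕ → Fin d, ∀ i : ℕ, ∀ h : i < v.length,
          g (append v x) i = v.get ⟨i, h⟩) ∧
        sect g v = g) ∧
      IsNonHausdorffElement g := by
  classical
  obtain ⟨g, hg, x, hgx, hno, hyes⟩ := hNH
  obtain ⟨N, hNfin, hNcon⟩ := hcontracting
  obtain ⟨n₀, hn₀⟩ := hNcon g hg
  have : Finite ↥N := hNfin.to_subtype
  have hmem : ∀ j : ℕ, sect g (StmtAux.pre x (n₀ + j)) ∈ N := fun j =>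
    hn₀ _ (by rw [StmtAux.pre_length]; omega)
  obtain ⟨a, b, hab, hfab⟩ := Finite.exists_ne_map_eq_of_infinite
    (fun j : ℕ => (⟨sect g (StmtAux.pre x (n₀ + j)), hmem j⟩ : N))
  have heq : sect g (StmtAux.pre x (n₀ + a)) = sect g (StmtAux.pre x (n₀ + b)) :=
    congrArg Subtype.val hfab
  have key : ∃ m k : ℕ, 0 < k ∧
      sect g (StmtAux.pre x m) = sect g (StmtAux.pre x (m + k)) := by
    rcases Nat.lt_or_ge a b with hlt | hge
    · refine ⟨n₀ + a, b - a, by omega, ?_⟩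
      rw [show n₀ + a + (b - a) = n₀ + b by omega]
      exact heq
    · refine ⟨n₀ + b, a - b, by omega, ?_⟩
      rw [show n₀ + b + (a - b) = n₀ + a by omega]
      exact heq.symm
  obtain ⟨m, k, hk, hsect⟩ := key
  set v : List (Fin d) := StmtAux.pre x m with hv
  set w : List (Fin d) := List.ofFn (fun i : Fin k => x (m + i)) with hwdef
  have hvw : v ++ w = StmtAux.pre x (m + k) := (StmtAux.pre_add x m k).symm
  have hvlen : v.length = m := StmtAux.pre_length x m
  have hwlen : w.length = k := by simp [hwdef]
  set h := sect g v with hh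
  have hLP : LevelPreserving g := (haut g hg).2
  have hfix : ∀ (l : ℕ) (z : ℕ → Fin d), (∀ i < l, z i = x i) → ∀ i < l, g z i = x i := by
    intro l z hz i hi
    have := hLP l z x hz i hi
    rw [this, hgx]
  have hGmem : h ∈ G := hselfsimilar g hg v
  set y : ℕ → Fin d := fun n => x (n + m) with hy
  have happend : append v y = x := by
    have := StmtAux.append_of_cyl v x (fun i hi => (StmtAux.pre_get x m i hi).symm)
    rw [hvlen] at this
    exact this
  have hrep : ∀ z : ℕ → Fin d, (∀ i < m, z i = x i) →
      append v (fun n => z (n + m)) = z := by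
    intro z hz
    have hz' : ∀ i (hi : i < v.length), z i = v.get ⟨i, hi⟩ := by
      intro i hi
      rw [StmtAux.pre_get x m i hi]
      exact hz i (by omega)
    have := StmtAux.append_of_cyl v z hz'
    rw [hvlen] at this
    exact this
  have hUopen : ∀ W : Set (ℕ → Fin d), IsOpen W →
      IsOpen {z : ℕ → Fin d | (∀ i < m, z i = x i) ∧ (fun n => z (n + m)) ∈ W} :=
    fun W hW => (StmtAux.isOpen_cyl x m).inter (hW.preimage (StmtAux.continuous_shift m))
  have hxU : ∀ W : Set (ℕ → Fin d), y ∈ W →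
      x ∈ {z : ℕ → Fin d | (∀ i < m, z i = x i) ∧ (fun n => z (n + m)) ∈ W} :=
    fun W hyW => ⟨fun _ _ => rfl, hyW⟩
  have hgU : ∀ W : Set (ℕ → Fin d), Set.EqOn h id W →
      Set.EqOn g id {z : ℕ → Fin d | (∀ i < m, z i = x i) ∧ (fun n => z (n + m)) ∈ W} := by
    intro W hEq z hzU
    obtain ⟨hz1, hz2⟩ := hzU
    have hzrep := hrep z hz1
    funext j
    by_cases hj : j < m
    · exact (hfix m z hz1 j hj).trans (hz1 j hj).symm
    · have e1 : h (fun n => z (n + m)) (j - m) = g z j := by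
        rw [hh]
        show g (append v (fun n => z (n + m))) ((j - m) + v.length) = g z j
        rw [hzrep, hvlen]
        congr 1
        omega
      have e2 : h (fun n => z (n + m)) = fun n => z (n + m) := hEq hz2
      calc g z j = (fun n => z (n + m)) (j - m) := by rw [← e1, e2]
        _ = z j := by show z (j - m + m) = z j; congr 1; omega
  have hA : ∀ W : Set (ℕ → Fin d), IsOpen W → y ∈ W → ¬ Set.EqOn h id W := by
    intro W hW hyW hEq
    exact hno _ (hUopen W hW) (hxU W hyW) (hgU W hEq)
  have hB : ∀ W : Set (ℕ → Fin d), IsOpen W → y ∈ W →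
      ∃ O : Set (ℕ → Fin d), IsOpen O ∧ O.Nonempty ∧ O ⊆ W ∧ Set.EqOn h id O := by
    intro W hW hyW
    obtain ⟨O, hOopen, hOne, hOsub, hOeq⟩ := hyes _ (hUopen W hW) (hxU W hyW)
    refine ⟨append v ⁻¹' O, hOopen.preimage (StmtAux.continuous_append v), ?_, ?_, ?_⟩
    · obtain ⟨z, hz⟩ := hOne
      refine ⟨fun n => z (n + m), ?_⟩
      rw [Set.mem_preimage, hrep z (hOsub hz).1]
      exact hz
    · intro w' hw'
      have h2 := (hOsub hw').2
      have h3 : (fun n => append v w' (n + m)) = w' := by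
        funext n
        have := StmtAux.append_ge v w' n
        rw [hvlen] at this
        exact this
      rwa [h3] at h2
    · intro w' hw'
      have e3 : g (append v w') = append v w' := hOeq hw'
      funext n
      rw [hh]
      show g (append v w') (n + v.length) = w' n
      rw [e3]
      exact StmtAux.append_ge v w' n
  have hfixy : h y = y := by
    funext n
    rw [hh]
    show g (append v y) (n + v.length) = y n
    rw [happend, hgx, hvlen]
  have hpref : ∀ (x' : ℕ → Fin d) (i : ℕ) (hi : i < w.length),
      h (append w x') i = w.get ⟨i, hi⟩ := by
    intro x' i hi
    have hi' : i < k := by rwa [hwlen] at hi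
    rw [hh]
    show g (append v (append w x')) (i + v.length) = w.get ⟨i, hi⟩
    rw [StmtAux.append_append, hvw, hvlen]
    have hagree : ∀ j < m + k, append (StmtAux.pre x (m + k)) x' j = x j := by
      intro j hj
      have hj2 : j < (StmtAux.pre x (m + k)).length := by
        rw [StmtAux.pre_length]; exact hj
      rw [StmtAux.append_lt _ _ j hj2, StmtAux.pre_get]
    rw [hfix (m + k) _ hagree (i + m) (by omega)]
    have hget : w.get ⟨i, hi⟩ = x (m + i) := by simp [hwdef]
    rw [hget]
    congr 1
    omega
  have hwne : w ≠ [] := by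
    intro hc
    rw [hc] at hwlen
    simp at hwlen
    omega
  have hsw : sect h w = h := by
    rw [hh, StmtAux.sect_sect, hvw, ← hsect]
  exact ⟨h, hGmem, ⟨w, hwne, hpref, hsw⟩, ⟨y, hfixy, hA, hB⟩⟩
end

section
/- Let G be the subgroup of the group of bijections of ℚ generated by a : x ↦ x + 1, b : x ↦ −x, and c : x ↦ 5x. For m ≥ 0 set G_m = ⟨a^{2^m}, b, c⟩. Then for all integers n ≥ m + 2, the normal core of G_n in G_m (the largest subgroup of G_n normal in G_m) equals ⟨a^{2^n}, c^{2^{n−m−2}}⟩, and the quotient of G_n by this core is isomorphic to the unit group (ℤ/2^{n−m}ℤ)ˣ. -/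
/-- The translation `x ↦ x + 1` of `ℚ`. -/
def aQ : Equiv.Perm ℚ := Equiv.addRight 1

/-- The negation `x ↦ -x` of `ℚ`. -/
def bQ : Equiv.Perm ℚ := Equiv.neg ℚ

/-- The multiplication `x ↦ 5 * x` of `ℚ`. -/
def cQ : Equiv.Perm ℚ := Equiv.mulLeft₀ 5 (by norm_num)

/-!
Every element of `G_r = ⟨a^{2^r}, b, c⟩` is an affine map `x ↦ u x + t` with slope `u = ±5^k` and
translation part `t ∈ 2^r ℤ[1/5]`, and every such map lies in `G_r`. Conjugating `x ↦ u x + t` by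
`x ↦ v x + s` gives `x ↦ u x + (v t + (1 - u) s)`. Taking `s = 2^m` shows that an element of the
normal core of `G_n` in `G_m` satisfies `1 - u ∈ 2^{n-m} ℤ[1/5]`, and the same formula shows that
this condition suffices. For `u = ±5^k` it says `±5^k ≡ 1 (mod 2^{n-m})`, i.e. the sign is `+` and
`2^{n-m-2} ∣ k`, because `5` has order `2^{n-m-2}` modulo `2^{n-m}` while `-1` is not a power of `5`
modulo `4`. Finally `x ↦ u x + t` ↦ `u mod 2^{n-m}` is a homomorphism from `G_n` onto
`(ℤ/2^{n-m})ˣ` (which is generated by `-1` and `5`) whose kernel is that core.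
-/

open Equiv Subgroup

section Affine

variable {K : Type*} [DivisionRing K]

def affPerm (u : Kˣ) (t : K) : Perm K where
  toFun x := u * x + t
  invFun x := ↑u⁻¹ * (x - t)
  left_inv x := by simp
  right_inv x := by simp

@[simp]
theorem affPerm_apply (u : Kˣ) (t x : K) : affPerm u t x = u * x + t := rfl

theorem affPerm_mul (u v : Kˣ) (s t : K) :
    affPerm u s * affPerm v t = affPerm (u * v) (u * t + s) := by
  ext x
  simp [mul_add, mul_assoc, add_assoc]

theorem affPerm_one_zero : affPerm (1 : Kˣ) 0 = 1 := by
  ext x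
  simp

theorem affPerm_inv (u : Kˣ) (t : K) : (affPerm u t)⁻¹ = affPerm u⁻¹ (-(↑u⁻¹ * t)) := by
  rw [inv_eq_iff_mul_eq_one, affPerm_mul, mul_inv_cancel, mul_neg, ← mul_assoc, Units.mul_inv,
    one_mul, neg_add_cancel, affPerm_one_zero]

theorem affPerm_inj {u v : Kˣ} {s t : K} : affPerm u s = affPerm v t ↔ u = v ∧ s = t := by
  refine ⟨fun h => ?_, fun ⟨hu, hs⟩ => hu ▸ hs ▸ rfl⟩
  have h0 : s = t := by simpa using congr($h 0)
  have h1 : (u : K) + s = v + t := by simpa using congr($h 1)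
  exact ⟨Units.ext (by rwa [h0, add_left_inj] at h1), h0⟩

theorem affPerm_one_zpow (t : K) (k : ℤ) : affPerm 1 t ^ k = affPerm 1 (k • t) := by
  induction k using Int.induction_on with
  | zero => simp [affPerm_one_zero]
  | succ k ih => rw [zpow_add_one, ih, affPerm_mul]; simp [add_smul, add_comm]
  | pred k ih =>
    rw [zpow_sub_one, ih, affPerm_inv, affPerm_mul, sub_smul, one_smul, sub_eq_add_neg, add_comm]
    simp

theorem affPerm_one_pow (t : K) (k : ℕ) : affPerm 1 t ^ k = affPerm 1 (k • t) := by
  simpa using affPerm_one_zpow t k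

def scaleHom : Kˣ →* Perm K where
  toFun u := affPerm u 0
  map_one' := affPerm_one_zero
  map_mul' u v := by rw [affPerm_mul]; simp

@[simp]
theorem scaleHom_apply (u : Kˣ) : scaleHom u = affPerm u 0 := rfl

theorem affPerm_conj {F : Type*} [Field F] (v u : Fˣ) (s t : F) :
    affPerm v s * affPerm u t * (affPerm v s)⁻¹ = affPerm u (v * t + (1 - u) * s) := by
  ext x
  simp only [affPerm_inv, Perm.mul_apply, affPerm_apply, Units.val_inv_eq_inv_val]
  field_simp
  ring

def affSubgroup (V : Subgroup Kˣ) (T : AddSubgroup K) (hVT : ∀ v ∈ V, ∀ t ∈ T, (v : K) * t ∈ T) :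
    Subgroup (Perm K) where
  carrier := {g | ∃ v ∈ V, ∃ t ∈ T, affPerm v t = g}
  mul_mem' := by
    rintro _ _ ⟨u, hu, s, hs, rfl⟩ ⟨v, hv, t, ht, rfl⟩
    exact ⟨u * v, mul_mem hu hv, u * t + s, add_mem (hVT u hu t ht) hs, (affPerm_mul ..).symm⟩
  one_mem' := ⟨1, one_mem V, 0, zero_mem T, affPerm_one_zero⟩
  inv_mem' := by
    rintro _ ⟨v, hv, t, ht, rfl⟩
    exact ⟨v⁻¹, inv_mem hv, _, neg_mem (hVT _ (inv_mem hv) t ht), (affPerm_inv v t).symm⟩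

variable {V : Subgroup Kˣ} {T : AddSubgroup K} {hVT : ∀ v ∈ V, ∀ t ∈ T, (v : K) * t ∈ T}

theorem affPerm_mem_affSubgroup_iff {v : Kˣ} {t : K} :
    affPerm v t ∈ affSubgroup V T hVT ↔ v ∈ V ∧ t ∈ T := by
  refine ⟨?_, fun ⟨hv, ht⟩ => ⟨v, hv, t, ht, rfl⟩⟩
  rintro ⟨v', hv', t', ht', h⟩
  obtain ⟨rfl, rfl⟩ := affPerm_inj.1 h
  exact ⟨hv', ht'⟩

def affSubgroup.slope : affSubgroup V T hVT →* Kˣ where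
  toFun g := Units.mk0 ((g : Perm K) 1 - (g : Perm K) 0) <| by
    obtain ⟨v, -, t, -, hg⟩ := g.2
    simp [← hg]
  map_one' := by ext; simp
  map_mul' := by
    rintro ⟨_, u, -, s, -, rfl⟩ ⟨_, v, -, t, -, rfl⟩
    ext
    simp [mul_add]

@[simp]
theorem affSubgroup.slope_affPerm {v : Kˣ} {t : K} (h : affPerm v t ∈ affSubgroup V T hVT) :
    affSubgroup.slope ⟨affPerm v t, h⟩ = v := by
  ext
  simp [affSubgroup.slope]

theorem closure_insert_affPerm_eq {S : Set Kˣ} (hS : closure S = V) {τ : K} (hτ : τ ∈ T)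
    (hT : ∀ t ∈ T, ∃ v ∈ V, ∃ z : ℤ, t = v * (z • τ)) :
    closure (insert (affPerm 1 τ) (scaleHom '' S)) = affSubgroup V T hVT := by
  subst hS
  apply le_antisymm
  · rw [closure_le]
    rintro _ (rfl | ⟨s, hs, rfl⟩)
    · exact ⟨1, one_mem _, τ, hτ, rfl⟩
    · exact ⟨s, subset_closure hs, 0, zero_mem T, rfl⟩
  · rintro _ ⟨v, hv, t, ht, rfl⟩
    have hscale : ∀ w ∈ closure S, scaleHom w ∈ closure (insert (affPerm 1 τ) (scaleHom '' S)) :=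
      fun w hw => closure_mono (Set.subset_insert _ _)
        (MonoidHom.map_closure scaleHom S ▸ mem_map_of_mem scaleHom hw)
    obtain ⟨w, hw, z, rfl⟩ := hT t ht
    have hconj : affPerm v (w * (z • τ)) = scaleHom w * affPerm 1 τ ^ z * scaleHom (w⁻¹ * v) := by
      simp [affPerm_one_zpow, affPerm_mul]
    rw [hconj]
    exact mul_mem (mul_mem (hscale w hw) (zpow_mem (subset_closure (Set.mem_insert _ _)) z))
      (hscale _ (mul_mem (inv_mem hw) hv))

end Affine

namespace ArithIMG

instance : Fact (Nat.Prime 5) := ⟨Nat.prime_five⟩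

def five : ℚˣ := Units.mk0 5 (by norm_num)

@[simp]
theorem val_five : (five : ℚ) = 5 := rfl

def slopes : Subgroup ℚˣ := closure {-1, five}

theorem mem_slopes_iff {u : ℚˣ} : u ∈ slopes ↔ ∃ k : ℤ, u = five ^ k ∨ u = -five ^ k := by
  rw [slopes, mem_closure_pair]
  constructor
  · rintro ⟨i, k, rfl⟩
    rcases Int.even_or_odd i with hi | hi
    · exact ⟨k, Or.inl (by simp [hi.neg_one_zpow])⟩
    · exact ⟨k, Or.inr (by simp [hi.neg_one_zpow])⟩
  · rintro ⟨k, rfl | rfl⟩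
    · exact ⟨0, k, by simp⟩
    · exact ⟨1, k, by simp⟩

def translations (r : ℕ) : AddSubgroup ℚ where
  carrier := {q | ∃ j : ℕ, ∃ w : ℤ, q * 5 ^ j = 2 ^ r * w}
  zero_mem' := ⟨0, 0, by simp⟩
  add_mem' := by
    rintro q q' ⟨j, w, hw⟩ ⟨j', w', hw'⟩
    refine ⟨j + j', w * 5 ^ j' + w' * 5 ^ j, ?_⟩
    push_cast
    linear_combination (5 : ℚ) ^ j' * hw + (5 : ℚ) ^ j * hw'
  neg_mem' := by
    rintro q ⟨j, w, hw⟩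
    exact ⟨j, -w, by push_cast; linear_combination -hw⟩

theorem two_pow_mem_translations (r : ℕ) : (2 : ℚ) ^ r ∈ translations r := ⟨0, 1, by simp⟩

theorem mul_mem_translations {a b : ℕ} {q q' : ℚ} (hq : q ∈ translations a)
    (hq' : q' ∈ translations b) : q * q' ∈ translations (a + b) := by
  obtain ⟨j, w, hw⟩ := hq
  obtain ⟨j', w', hw'⟩ := hq'
  refine ⟨j + j', w * w', ?_⟩
  push_cast
  rw [pow_add, pow_add]
  linear_combination (q' * 5 ^ j') * hw + (2 ^ a * w) * hw'

theorem zpow_five_mem_translations_zero (k : ℤ) : (5 : ℚ) ^ k ∈ translations 0 := by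
  have hk : k + ((-k).toNat : ℤ) = k.toNat := by omega
  refine ⟨(-k).toNat, 5 ^ k.toNat, ?_⟩
  rw [← zpow_natCast, ← zpow_add₀ (by norm_num), hk, zpow_natCast]
  push_cast
  ring

theorem slopes_mul_mem {u : ℚˣ} (hu : u ∈ slopes) {r : ℕ} {t : ℚ} (ht : t ∈ translations r) :
    (u : ℚ) * t ∈ translations r := by
  obtain ⟨k, rfl | rfl⟩ := mem_slopes_iff.1 hu
  · simpa using mul_mem_translations (zpow_five_mem_translations_zero k) ht
  · simpa using neg_mem (mul_mem_translations (zpow_five_mem_translations_zero k) ht)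

theorem mem_translations_of_two_pow_mul {m E : ℕ} {q : ℚ} (h : 2 ^ m * q ∈ translations (m + E)) :
    q ∈ translations E := by
  obtain ⟨j, w, hw⟩ := h
  refine ⟨j, w, mul_left_cancel₀ (pow_ne_zero m two_ne_zero) ?_⟩
  rw [pow_add] at hw
  linear_combination hw

theorem intCast_div_mem_translations_iff (E : ℕ) (z : ℤ) (b : ℕ) :
    (z : ℚ) / 5 ^ b ∈ translations E ↔ (z : ZMod (2 ^ E)) = 0 := by
  rw [ZMod.intCast_zmod_eq_zero_iff_dvd]
  constructor
  · rintro ⟨j, w, hw⟩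
    have hz : z * 5 ^ j = 2 ^ E * (w * 5 ^ b) := by
      have : (z : ℚ) * 5 ^ j = 2 ^ E * (w * 5 ^ b) := by
        field_simp at hw
        linear_combination hw
      exact_mod_cast this
    have hcop : IsCoprime ((2 : ℤ) ^ E) (5 ^ j) :=
      (Int.isCoprime_iff_gcd_eq_one.mpr (by norm_num)).pow
    push_cast
    exact hcop.dvd_of_dvd_mul_right ⟨_, hz⟩
  · rintro ⟨w, rfl⟩
    exact ⟨b, w, by push_cast; field_simp⟩

def fiveMod (E : ℕ) : (ZMod (2 ^ E))ˣ :=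
  ZMod.unitOfCoprime 5 (Nat.Coprime.pow_right E (by norm_num))

@[simp]
theorem val_fiveMod (E : ℕ) : (fiveMod E : ZMod (2 ^ E)) = 5 := by
  simp [fiveMod]

theorem orderOf_fiveMod (e : ℕ) : orderOf (fiveMod (e + 2)) = 2 ^ e := by
  rw [← orderOf_units, val_fiveMod, ZMod.orderOf_five]

theorem neg_one_notMem_zpowers_fiveMod (e : ℕ) :
    (-1 : (ZMod (2 ^ (e + 2)))ˣ) ∉ zpowers (fiveMod (e + 2)) := by
  rintro ⟨k, hk⟩
  have h4 : 4 ∣ 2 ^ (e + 2) := ⟨2 ^ e, by ring⟩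
  have h := congr(ZMod.unitsMap h4 $hk)
  have h5 : ZMod.unitsMap h4 (fiveMod (e + 2)) = 1 := by
    ext
    simp only [ZMod.unitsMap_def, Units.coe_map, MonoidHom.coe_coe, ZMod.castHom_apply, val_fiveMod,
      Units.val_one]
    exact ZMod.cast_natCast h4 5
  rw [map_zpow, h5, one_zpow] at h
  have hneg : ZMod.unitsMap h4 (-1) = -1 := by
    ext
    simp [ZMod.unitsMap_def]
  rw [hneg] at h
  exact absurd h (by decide)

theorem closure_neg_one_fiveMod (e : ℕ) : Subgroup.closure {-1, fiveMod (e + 2)} = ⊤ := by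
  have hcard : Nat.card (ZMod (2 ^ (e + 2)))ˣ = 2 ^ (e + 1) := by
    rw [Nat.card_eq_fintype_card, ZMod.card_units_eq_totient,
      Nat.totient_prime_pow_succ Nat.prime_two]
    simp
  have hindex : (zpowers (fiveMod (e + 2))).index = 2 := by
    have h := (zpowers (fiveMod (e + 2))).index_mul_card
    rw [Nat.card_zpowers, orderOf_fiveMod, hcard] at h
    exact Nat.eq_of_mul_eq_mul_right (pow_pos two_pos e) (by rw [h, pow_succ'])
  have hle : zpowers (fiveMod (e + 2)) ≤ Subgroup.closure {-1, fiveMod (e + 2)} :=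
    zpowers_le.2 (subset_closure (by simp))
  rw [eq_top_iff]
  intro x _
  by_cases hx : x ∈ zpowers (fiveMod (e + 2))
  · exact hle hx
  · have hneg : -1 * x ∈ zpowers (fiveMod (e + 2)) := by
      rw [mul_mem_iff_of_index_two hindex]
      exact iff_of_false (neg_one_notMem_zpowers_fiveMod e) hx
    have hneg_one : (-1 : (ZMod (2 ^ (e + 2)))ˣ) ∈ Subgroup.closure {-1, fiveMod (e + 2)} :=
      subset_closure (by simp)
    simpa using mul_mem hneg_one (hle hneg)

/-- On a slope `±5^k` this is `±5^k mod 2^E`; sign and `5`-adic valuation make it a homomorphism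
on all of `ℚˣ`. -/
def residue (E : ℕ) : ℚˣ →* (ZMod (2 ^ E))ˣ where
  toFun u := (if 0 < (u : ℚ) then 1 else -1) * fiveMod E ^ padicValRat 5 u
  map_one' := by simp
  map_mul' u v := by
    rw [Units.val_mul, padicValRat.mul u.ne_zero v.ne_zero, zpow_add]
    rcases u.ne_zero.lt_or_gt with hu | hu <;> rcases v.ne_zero.lt_or_gt with hv | hv <;>
      simp [mul_pos_iff, hu, hv, hu.not_gt, hv.not_gt]

theorem residue_neg_one (E : ℕ) : residue E (-1) = -1 := by
  simp [residue]

theorem residue_five (E : ℕ) : residue E five = fiveMod E := by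
  have h : padicValRat 5 5 = 1 := by simpa using padicValRat.self (p := 5) (by norm_num)
  simp [residue, h]

theorem residue_eq_one_iff {e : ℕ} {u : ℚˣ} (hu : u ∈ slopes) :
    residue (e + 2) u = 1 ↔ u ∈ zpowers (five ^ 2 ^ e) := by
  constructor
  · obtain ⟨k, rfl | rfl⟩ := mem_slopes_iff.1 hu
    · rw [map_zpow, residue_five, ← orderOf_dvd_iff_zpow_eq_one, orderOf_fiveMod]
      rintro ⟨l, rfl⟩
      exact mem_zpowers_iff.2 ⟨l, by rw [← zpow_natCast, ← zpow_mul]⟩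
    · rw [← neg_one_mul, map_mul, map_zpow, residue_neg_one, residue_five, mul_eq_one_iff_eq_inv,
        ← zpow_neg]
      intro h
      exact absurd ⟨-k, h.symm⟩ (neg_one_notMem_zpowers_fiveMod e)
  · rintro ⟨l, rfl⟩
    rw [map_zpow, map_pow, residue_five, ← orderOf_fiveMod e, pow_orderOf_eq_one, one_zpow]

theorem map_residue_slopes (e : ℕ) : slopes.map (residue (e + 2)) = ⊤ := by
  rw [slopes, MonoidHom.map_closure, Set.image_pair, residue_neg_one, residue_five,
    closure_neg_one_fiveMod]

theorem one_sub_div_mem_translations_iff (E a b : ℕ) (σ : ℤ) :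
    1 - (σ : ℚ) * 5 ^ a / 5 ^ b ∈ translations E ↔ (σ * 5 ^ a : ZMod (2 ^ E)) = 5 ^ b := by
  have h : 1 - (σ : ℚ) * 5 ^ a / 5 ^ b = ((5 ^ b - σ * 5 ^ a : ℤ) : ℚ) / 5 ^ b := by
    push_cast
    field_simp
  rw [h, intCast_div_mem_translations_iff, Int.cast_sub, sub_eq_zero, eq_comm]
  push_cast
  rfl

theorem one_sub_mem_translations_iff {E : ℕ} {u : ℚˣ} (hu : u ∈ slopes) :
    1 - (u : ℚ) ∈ translations E ↔ residue E u = 1 := by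
  obtain ⟨k, hk⟩ := mem_slopes_iff.1 hu
  obtain ⟨a, b, rfl⟩ : ∃ a b : ℕ, k = a - b := ⟨k.toNat, (-k).toNat, by omega⟩
  have hval : ((five ^ ((a : ℤ) - b) : ℚˣ) : ℚ) = 5 ^ a / 5 ^ b := by
    simp [zpow_sub₀]
  have hres : residue E (five ^ ((a : ℤ) - b)) = fiveMod E ^ a * (fiveMod E ^ b)⁻¹ := by
    simp [residue_five, zpow_sub]
  rcases hk with rfl | rfl
  · have := one_sub_div_mem_translations_iff E a b 1
    rw [hval, hres, mul_inv_eq_one, Units.ext_iff]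
    simpa using this
  · have := one_sub_div_mem_translations_iff E a b (-1)
    rw [Units.val_neg, hval, ← neg_one_mul (five ^ ((a : ℤ) - b)), map_mul, residue_neg_one, hres,
      ← mul_assoc, mul_inv_eq_one, Units.ext_iff]
    simpa [neg_div] using this

theorem one_sub_mem_translations_iff_mem_zpowers {e : ℕ} {u : ℚˣ} (hu : u ∈ slopes) :
    1 - (u : ℚ) ∈ translations (e + 2) ↔ u ∈ zpowers (five ^ 2 ^ e) :=
  (one_sub_mem_translations_iff hu).trans (residue_eq_one_iff hu)

theorem zpowers_le_slopes (e : ℕ) : zpowers (five ^ 2 ^ e) ≤ slopes :=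
  zpowers_le.2 (pow_mem (subset_closure (by simp)) _)

abbrev levelGroup (r : ℕ) : Subgroup (Perm ℚ) :=
  affSubgroup slopes (translations r) fun _ hu _ ht => slopes_mul_mem hu ht

abbrev coreGroup (n e : ℕ) : Subgroup (Perm ℚ) :=
  affSubgroup (zpowers (five ^ 2 ^ e)) (translations n) fun _ hu _ ht =>
    slopes_mul_mem (zpowers_le_slopes e hu) ht

theorem aQ_pow_two_pow (r : ℕ) : aQ ^ 2 ^ r = affPerm 1 (2 ^ r) := by
  have ha : aQ = affPerm 1 1 := by ext; simp [aQ]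
  rw [ha, affPerm_one_pow]
  simp

theorem bQ_eq_scaleHom : bQ = scaleHom (-1) := by ext; simp [bQ]

theorem cQ_eq_scaleHom : cQ = scaleHom five := by ext; simp [cQ]

theorem closure_eq_levelGroup (r : ℕ) : Subgroup.closure {aQ ^ 2 ^ r, bQ, cQ} = levelGroup r := by
  rw [aQ_pow_two_pow, bQ_eq_scaleHom, cQ_eq_scaleHom, ← Set.image_pair]
  refine closure_insert_affPerm_eq rfl (two_pow_mem_translations r) ?_
  rintro t ⟨j, w, hw⟩
  refine ⟨five ^ (-(j : ℤ)), zpow_mem (subset_closure (by simp)) _, w, ?_⟩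
  simp only [zpow_neg, zpow_natCast, Units.val_inv_eq_inv_val, Units.val_pow_eq_pow_val, val_five,
    zsmul_eq_mul]
  field_simp
  linear_combination hw

theorem closure_eq_coreGroup (n e : ℕ) :
    Subgroup.closure {aQ ^ 2 ^ n, cQ ^ 2 ^ e} = coreGroup n e := by
  rw [aQ_pow_two_pow, cQ_eq_scaleHom, ← map_pow, ← Set.image_singleton]
  refine closure_insert_affPerm_eq (zpowers_eq_closure _).symm (two_pow_mem_translations n) ?_
  rintro t ⟨j, w, hw⟩
  -- `t = 2^n w / 5^j = (5^{2^e})^{-j} * 2^n w 5^{(2^e - 1) j}`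
  refine ⟨(five ^ 2 ^ e) ^ (-(j : ℤ)), zpow_mem (mem_zpowers _) _, w * 5 ^ ((2 ^ e - 1) * j), ?_⟩
  have hexp : (2 ^ e - 1) * j + j = 2 ^ e * j := by
    rw [Nat.sub_mul, one_mul, Nat.sub_add_cancel (Nat.le_mul_of_pos_left j (by positivity))]
  have h5 : (5 : ℚ) ^ ((2 ^ e - 1) * j) * 5 ^ j = (5 ^ 2 ^ e) ^ j := by
    rw [← pow_add, hexp, pow_mul]
  simp only [zpow_neg, zpow_natCast, Units.val_inv_eq_inv_val, Units.val_pow_eq_pow_val, val_five,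
    zsmul_eq_mul]
  push_cast
  field_simp
  linear_combination (5 : ℚ) ^ ((2 ^ e - 1) * j) * hw - t * h5

theorem coreGroup_le_levelGroup (n e : ℕ) : coreGroup n e ≤ levelGroup n := by
  rintro _ ⟨u, hu, t, ht, rfl⟩
  exact ⟨u, zpowers_le_slopes e hu, t, ht, rfl⟩

theorem conj_mem_coreGroup {m e : ℕ} {b g : Perm ℚ} (hb : b ∈ levelGroup m)
    (hg : g ∈ coreGroup (m + (e + 2)) e) : b * g * b⁻¹ ∈ coreGroup (m + (e + 2)) e := by
  obtain ⟨v, hv, s, hs, rfl⟩ := hb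
  obtain ⟨u, hu, t, ht, rfl⟩ := hg
  rw [affPerm_conj, coreGroup, affPerm_mem_affSubgroup_iff]
  have hu' := (one_sub_mem_translations_iff_mem_zpowers (zpowers_le_slopes e hu)).2 hu
  exact ⟨hu, add_mem (slopes_mul_mem hv ht) (mul_comm s _ ▸ mul_mem_translations hs hu')⟩

theorem mem_coreGroup_of_conj_mem {m e : ℕ} {g : Perm ℚ} (hg : g ∈ levelGroup (m + (e + 2)))
    (hconj : aQ ^ 2 ^ m * g * (aQ ^ 2 ^ m)⁻¹ ∈ levelGroup (m + (e + 2))) :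
    g ∈ coreGroup (m + (e + 2)) e := by
  obtain ⟨u, hu, t, ht, rfl⟩ := hg
  rw [aQ_pow_two_pow, affPerm_conj, levelGroup, affPerm_mem_affSubgroup_iff] at hconj
  have h : 2 ^ m * (1 - (u : ℚ)) ∈ translations (m + (e + 2)) := by
    simpa [mul_comm] using sub_mem hconj.2 ht
  exact ⟨u, (one_sub_mem_translations_iff_mem_zpowers hu).1 (mem_translations_of_two_pow_mul h),
    t, ht, rfl⟩

theorem normalCore_subgroupOf_levelGroup (m e : ℕ) :
    ((levelGroup (m + (e + 2))).subgroupOf (levelGroup m)).normalCore =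
      (coreGroup (m + (e + 2)) e).subgroupOf (levelGroup m) := by
  ext g
  rw [mem_subgroupOf]
  constructor
  · intro hg
    have ha : aQ ^ 2 ^ m ∈ levelGroup m :=
      ⟨1, one_mem _, 2 ^ m, two_pow_mem_translations m, (aQ_pow_two_pow m).symm⟩
    exact mem_coreGroup_of_conj_mem (by simpa [mem_subgroupOf] using hg 1)
      (by simpa [mem_subgroupOf] using hg ⟨_, ha⟩)
  · intro hg b
    exact coreGroup_le_levelGroup _ e (conj_mem_coreGroup b.2 hg)

def residueHom (n e : ℕ) : levelGroup n →* (ZMod (2 ^ (e + 2)))ˣ :=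
  (residue (e + 2)).comp affSubgroup.slope

theorem ker_residueHom (n e : ℕ) :
    (residueHom n e).ker = (coreGroup n e).subgroupOf (levelGroup n) := by
  ext ⟨g, hg⟩
  obtain ⟨u, hu, t, ht, rfl⟩ := id hg
  rw [MonoidHom.mem_ker, mem_subgroupOf, residueHom, MonoidHom.comp_apply,
    affSubgroup.slope_affPerm, residue_eq_one_iff hu, coreGroup, affPerm_mem_affSubgroup_iff]
  exact (and_iff_left ht).symm

theorem residueHom_surjective (n e : ℕ) : Function.Surjective (residueHom n e) := by
  intro x
  obtain ⟨u, hu, rfl⟩ := mem_map.1 ((map_residue_slopes e).symm ▸ mem_top x)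
  exact ⟨⟨affPerm u 0, affPerm_mem_affSubgroup_iff.2 ⟨hu, zero_mem _⟩⟩, by simp [residueHom]⟩

theorem exists_mulEquiv_quotient_coreGroup (n e : ℕ) :
    ∃ _ : ((coreGroup n e).subgroupOf (levelGroup n)).Normal,
      Nonempty
        (levelGroup n ⧸ (coreGroup n e).subgroupOf (levelGroup n) ≃* (ZMod (2 ^ (e + 2)))ˣ) := by
  rw [← ker_residueHom]
  exact ⟨inferInstance, ⟨QuotientGroup.quotientKerEquivOfSurjective _ (residueHom_surjective n e)⟩⟩

end ArithIMG

/-- Let `G_m = ⟨a^{2^m}, b, c⟩` inside the group of bijections of `ℚ`, where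
`a : x ↦ x + 1`, `b : x ↦ -x`, `c : x ↦ 5x`.  For `n ≥ m + 2`, the normal core of `G_n`
in `G_m` equals `⟨a^{2^n}, c^{2^{n-m-2}}⟩`, and the quotient of `G_n` by this core is
isomorphic to the unit group `(ℤ/2^{n-m}ℤ)ˣ`. -/
theorem stmt15 (m n : ℕ) (hmn : m + 2 ≤ n) :
    ((Subgroup.closure {aQ ^ 2 ^ n, bQ, cQ}).subgroupOf
        (Subgroup.closure {aQ ^ 2 ^ m, bQ, cQ})).normalCore
      = (Subgroup.closure {aQ ^ 2 ^ n, cQ ^ 2 ^ (n - m - 2)}).subgroupOf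
          (Subgroup.closure {aQ ^ 2 ^ m, bQ, cQ}) ∧
    ∃ _ : ((Subgroup.closure {aQ ^ 2 ^ n, cQ ^ 2 ^ (n - m - 2)}).subgroupOf
        (Subgroup.closure {aQ ^ 2 ^ n, bQ, cQ})).Normal,
      Nonempty
        (((Subgroup.closure {aQ ^ 2 ^ n, bQ, cQ} : Subgroup (Equiv.Perm ℚ)) ⧸
            (Subgroup.closure {aQ ^ 2 ^ n, cQ ^ 2 ^ (n - m - 2)}).subgroupOf
              (Subgroup.closure {aQ ^ 2 ^ n, bQ, cQ})) ≃*
          (ZMod (2 ^ (n - m)))ˣ) := by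
  obtain ⟨e, rfl⟩ : ∃ e, n = m + (e + 2) := ⟨n - m - 2, by omega⟩
  rw [show m + (e + 2) - m - 2 = e by omega, show m + (e + 2) - m = e + 2 by omega,
    ArithIMG.closure_eq_levelGroup, ArithIMG.closure_eq_levelGroup, ArithIMG.closure_eq_coreGroup]
  exact ⟨ArithIMG.normalCore_subgroupOf_levelGroup m e,
    ArithIMG.exists_mulEquiv_quotient_coreGroup _ e⟩
end

section
/- Let ℤ₂ denote the ring of 2-adic integers, and let a, b, c be the bijections of ℤ₂ given by a(x) = x + 1, b(x) = −x, c(x) = 5x (note 5 is a unit in ℤ₂). Let G = ⟨a, b, c⟩ be the subgroup of bijections of ℤ₂ they generate. Then for every n ≥ 0, the set {g ∈ G : g(0) ∈ 2ⁿℤ₂} is a subgroup of G and equals ⟨a^{2ⁿ}, b, c⟩. -/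
/-!
Write `H = ⟨a^{2ⁿ}, b, c⟩`. Since `b a b⁻¹ = a⁻¹` and `c a c⁻¹ = a⁵`, with `-1` and `5` invertible
modulo `2ⁿ`, the set `⟨a⟩ H` is stable under left multiplication by `a^{±1}, b^{±1}, c^{±1}`,
so every `g ∈ G` is `a^j h` with `h ∈ H`. Every element of `H` preserves `2ⁿℤ₂`, so
`g(0) = h(0) + j ∈ 2ⁿℤ₂` forces `2ⁿ ∣ j`, i.e. `a^j ∈ H`.
-/

open Subgroup Pointwise

section ConjugatingPowers

variable {G : Type*} [Group G] {a : G} {S : Set G} {N : ℕ}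

theorem exists_zpow_mul_mem_closure_insert_pow
    (hS : ∀ x ∈ S, ∃ r : ℤ, IsCoprime r N ∧ SemiconjBy x a (a ^ r)) {g : G}
    (hg : g ∈ closure (insert a S)) :
    ∃ j : ℤ, ∃ h ∈ closure (insert (a ^ N) S), g = a ^ j * h := by
  set H := closure (insert (a ^ N) S)
  have haN : a ^ N ∈ H := subset_closure (Set.mem_insert _ _)
  have hSH : ∀ x ∈ S, x ∈ H := fun x hx => subset_closure (Set.mem_insert_of_mem _ hx)
  induction hg using closure_induction_left with
  | one => exact ⟨0, 1, one_mem H, by simp⟩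
  | mul_left x hx y _ ih =>
    obtain ⟨j, h, hh, rfl⟩ := ih
    rcases hx with rfl | hx
    · exact ⟨1 + j, h, hh, by rw [zpow_add, zpow_one, mul_assoc]⟩
    · obtain ⟨r, -, hxa⟩ := hS x hx
      refine ⟨r * j, x * h, mul_mem (hSH x hx) hh, ?_⟩
      rw [← mul_assoc, (hxa.zpow_right j).eq, ← zpow_mul, mul_assoc]
  | inv_mul_cancel x hx y _ ih =>
    obtain ⟨j, h, hh, rfl⟩ := ih
    rcases hx with rfl | hx
    · exact ⟨-1 + j, h, hh, by rw [zpow_add, zpow_neg_one, mul_assoc]⟩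
    · obtain ⟨r, ⟨u, v, huv⟩, hxa⟩ := hS x hx
      -- `x⁻¹` divides the exponent by `r`, which is possible up to a multiple of `N`
      have hinv : SemiconjBy x⁻¹ (a ^ (r * (u * j))) (a ^ (u * j)) := by
        rw [zpow_mul]
        exact (hxa.zpow_right _).inv_symm_left
      have hj : a ^ j = a ^ (r * (u * j)) * (a ^ N) ^ (v * j) := by
        rw [← zpow_natCast, ← zpow_mul, ← zpow_add]
        congr 1
        linear_combination (-j) * huv
      refine ⟨u * j, x⁻¹ * ((a ^ N) ^ (v * j) * h),
        mul_mem (inv_mem (hSH x hx)) (mul_mem (zpow_mem haN _) hh), ?_⟩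
      rw [hj, mul_assoc, ← mul_assoc x⁻¹, hinv.eq, mul_assoc]

end ConjugatingPowers

theorem Equiv.Perm.zpow_apply_of_forall_apply_eq_add_one {R : Type*} [Ring R] {f : Equiv.Perm R}
    (hf : ∀ x, f x = x + 1) (j : ℤ) (x : R) : (f ^ j) x = x + j := by
  induction j using Int.induction_on generalizing x with
  | zero => simp
  | succ k ih =>
    rw [zpow_add_one, Equiv.Perm.mul_apply, hf, ih]
    push_cast
    abel
  | pred k ih =>
    have hf_inv : f⁻¹ x = x - 1 := Equiv.Perm.inv_eq_iff_eq.mpr (by rw [hf, sub_add_cancel])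
    rw [zpow_sub_one, Equiv.Perm.mul_apply, ih, hf_inv]
    push_cast
    abel

theorem PadicInt.isUnit_intCast_of_not_dvd {p : ℕ} [Fact p.Prime] {k : ℤ} (hk : ¬(p : ℤ) ∣ k) :
    IsUnit (k : ℤ_[p]) := by
  by_contra h
  exact hk ((PadicInt.norm_int_lt_one_iff_dvd k).mp (PadicInt.not_isUnit_iff.mp h))

theorem Equiv.Perm.mem_stabilizer_setOf_dvd {R : Type*} [CommRing R] {d u t : R}
    {f : Equiv.Perm R} (hu : IsUnit u) (ht : d ∣ t) (hf : ∀ x, f x = u * x + t) :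
    f ∈ MulAction.stabilizer (Equiv.Perm R) {x | d ∣ x} := by
  rw [MulAction.mem_stabilizer_set]
  intro x
  simp only [Equiv.Perm.smul_def, Set.mem_ofPred_eq, hf, dvd_add_left ht, hu.dvd_mul_left]

section AffineGenerators

variable {a b c : Equiv.Perm ℤ_[2]} (ha : ∀ x, a x = x + 1) (hb : ∀ x, b x = -x)
  (hc : ∀ x, c x = 5 * x) (n : ℕ)

include ha hb hc

theorem exists_zpow_mul_mem_closure_pow_two_pow {g : Equiv.Perm ℤ_[2]}
    (hg : g ∈ closure {a, b, c}) :
    ∃ j : ℤ, ∃ h ∈ closure {a ^ 2 ^ n, b, c}, g = a ^ j * h := by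
  have ha_zpow := Equiv.Perm.zpow_apply_of_forall_apply_eq_add_one ha
  refine exists_zpow_mul_mem_closure_insert_pow ?_ hg
  rintro x (rfl | rfl)
  · refine ⟨-1, isCoprime_one_left.neg_left, Equiv.ext fun y => ?_⟩
    simp only [Equiv.Perm.mul_apply, ha_zpow, ha, hb]
    push_cast
    ring
  · refine ⟨5, ?_, Equiv.ext fun y => ?_⟩
    · push_cast
      exact IsCoprime.pow_right (Int.isCoprime_iff_gcd_eq_one.mpr rfl)
    · simp only [Equiv.Perm.mul_apply, ha_zpow, ha, hc]
      push_cast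
      ring

theorem closure_pow_two_pow_le_stabilizer :
    closure {a ^ 2 ^ n, b, c} ≤ MulAction.stabilizer _ {x : ℤ_[2] | 2 ^ n ∣ x} := by
  have hunit : IsUnit (5 : ℤ_[2]) := by
    exact_mod_cast PadicInt.isUnit_intCast_of_not_dvd (p := 2) (k := 5) (by decide)
  rw [closure_le]
  rintro f (rfl | rfl | rfl)
  · refine Equiv.Perm.mem_stabilizer_setOf_dvd isUnit_one (dvd_refl _) fun x => ?_
    rw [← zpow_natCast, Equiv.Perm.zpow_apply_of_forall_apply_eq_add_one ha]
    push_cast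
    ring
  · exact Equiv.Perm.mem_stabilizer_setOf_dvd isUnit_one.neg (dvd_zero _) fun x => by
      rw [hb]; ring
  · exact Equiv.Perm.mem_stabilizer_setOf_dvd hunit (dvd_zero _) fun x => by rw [hc]; ring

end AffineGenerators

/-- Let `a, b, c` be the bijections of the 2-adic integers given by `a(x) = x + 1`,
`b(x) = -x`, `c(x) = 5x`, and let `G = ⟨a, b, c⟩` be the group of bijections of `ℤ₂` that
they generate.  Then for every `n ≥ 0` the set `{g ∈ G : g(0) ∈ 2ⁿℤ₂}` is a subgroup of
`G`, namely it equals `⟨a^{2ⁿ}, b, c⟩`. -/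
theorem stmt16 (a b c : Equiv.Perm ℤ_[2])
    (ha : ∀ x, a x = x + 1) (hb : ∀ x, b x = -x) (hc : ∀ x, c x = 5 * x) (n : ℕ) :
    {g : Equiv.Perm ℤ_[2] | g ∈ Subgroup.closure {a, b, c} ∧ ∃ y : ℤ_[2], g 0 = 2 ^ n * y}
      = ((Subgroup.closure {a ^ 2 ^ n, b, c} : Subgroup (Equiv.Perm ℤ_[2])) :
          Set (Equiv.Perm ℤ_[2])) := by
  have hH := closure_pow_two_pow_le_stabilizer ha hb hc n
  have h_zero : ∀ h ∈ closure {a ^ 2 ^ n, b, c}, (2 : ℤ_[2]) ^ n ∣ h 0 := fun h hh =>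
    (MulAction.mem_stabilizer_set.mp (hH hh) 0).mpr (dvd_zero _)
  ext g
  refine ⟨fun ⟨hg, hg_zero⟩ => ?_, fun hg => ⟨(closure_le _).mpr ?_ hg, h_zero g hg⟩⟩
  · obtain ⟨j, h, hh, rfl⟩ := exists_zpow_mul_mem_closure_pow_two_pow ha hb hc n hg
    have hj : (2 : ℤ_[2]) ^ n ∣ (j : ℤ_[2]) := by
      rw [Equiv.Perm.mul_apply, Equiv.Perm.zpow_apply_of_forall_apply_eq_add_one ha] at hg_zero
      exact (dvd_add_right (h_zero h hh)).mp hg_zero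
    obtain ⟨q, rfl⟩ := (PadicInt.pow_p_dvd_int_iff n j).mp (by exact_mod_cast hj)
    rw [zpow_mul, ← Nat.cast_pow, zpow_natCast]
    exact mul_mem (zpow_mem (subset_closure (Set.mem_insert _ _)) q) hh
  · rintro f (rfl | rfl | rfl)
    · exact pow_mem (subset_closure (Set.mem_insert _ _)) _
    · exact subset_closure (Set.mem_insert_of_mem _ (Set.mem_insert _ _))
    · exact subset_closure (Set.mem_insert_of_mem _ (Set.mem_insert_of_mem _ rfl))
end

section
/- There exist a Cantor set X and a finitely generated subgroup G of the homeomorphism group of X whose action on X is minimal and equicontinuous, such that the action of G on X is not locally quasi-analytic and G contains no non-Hausdorff elements. (Thus non-LQA minimal Cantor actions of discrete groups with non-Hausdorff elements and without non-Hausdorff elements form two distinct nonempty classes.) -/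
/-- An action of a family `Γ` of self-maps of a metric space `X` is locally quasi-analytic
if there is `ε > 0` such that for every open set `U` of diameter less than `ε`,
any two elements of `Γ` that agree on a nonempty open subset `V ⊆ U` agree on all of `U`. -/
def IsLocallyQuasiAnalytic {X : Type*} [MetricSpace X] (Γ : Set (X → X)) : Prop :=
  ∃ ε > (0 : ℝ), ∀ U : Set X, IsOpen U → Metric.diam U < ε →
    ∀ g₁ ∈ Γ, ∀ g₂ ∈ Γ, ∀ V : Set X, V ⊆ U → IsOpen V → V.Nonempty →
      Set.EqOn g₁ g₂ V → Set.EqOn g₁ g₂ U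

namespace S19

open Set

noncomputable def p (m : ℕ) : ℕ := Nat.nth Nat.Prime (m + 2)
lemma p_prime (m : ℕ) : (p m).Prime := Nat.prime_nth_prime _
lemma p_lb (m : ℕ) : m + 4 ≤ p m := Nat.add_two_le_nth_prime (m + 2)
lemma p_ge5 (m : ℕ) : 5 ≤ p m := by
  have h4 : 4 ≤ p m := le_trans (by omega) (p_lb m)
  rcases eq_or_lt_of_le h4 with h | h
  · exfalso; have := p_prime m; rw [← h] at this; norm_num at this
  · omega
instance (m : ℕ) : NeZero (p m) := ⟨(p_prime m).pos.ne'⟩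
instance (m : ℕ) : Fact (1 < p m) := ⟨by have := p_ge5 m; omega⟩

abbrev E (m : ℕ) : Type := ZMod (p m)
instance instTopE (m : ℕ) : TopologicalSpace (E m) := ⊥
instance (m : ℕ) : DiscreteTopology (E m) := ⟨rfl⟩
abbrev Xc : Type := ∀ m, E m
noncomputable instance metricXc : MetricSpace Xc := PiNat.metricSpace

/-- homeomorph from an equiv of discrete spaces -/
def eqvHomeo {m : ℕ} (e : E m ≃ E m) : E m ≃ₜ E m :=
  { e with
    continuous_toFun := continuous_of_discreteTopology
    continuous_invFun := continuous_of_discreteTopology }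

noncomputable def ha : Xc ≃ₜ Xc :=
  Homeomorph.piCongrRight fun m => eqvHomeo (Equiv.addRight (1 : E m))

noncomputable def hb : Xc ≃ₜ Xc :=
  Homeomorph.piCongrRight fun m => eqvHomeo (Equiv.swap (0 : E m) (1 : E m))

lemma mul_apply (g h : Xc ≃ₜ Xc) (x : Xc) : (g * h) x = g (h x) := rfl
lemma one_apply (x : Xc) : (1 : Xc ≃ₜ Xc) x = x := rfl
lemma inv_coe (g : Xc ≃ₜ Xc) : ⇑(g⁻¹) = ⇑(g.symm) := rfl

lemma ha_apply (x : Xc) (m : ℕ) : ha x m = x m + 1 := rfl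
lemma hb_apply (x : Xc) (m : ℕ) : hb x m = Equiv.swap (0 : E m) (1 : E m) (x m) := rfl

lemma ha_pow_apply (k : ℕ) (x : Xc) (m : ℕ) : (ha ^ k) x m = x m + (k : E m) := by
  induction k generalizing x with
  | zero => simp [one_apply]
  | succ k ih =>
    rw [pow_succ, mul_apply, ih (ha x), ha_apply]
    push_cast
    ring

lemma ha_pow_inv_apply (k : ℕ) (x : Xc) (m : ℕ) : ((ha ^ k)⁻¹) x m = x m - (k : E m) := by
  have h1 : (ha ^ k) ((ha ^ k)⁻¹ x) = x := by
    rw [← mul_apply, mul_inv_cancel, one_apply]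
  have h2 := ha_pow_apply k ((ha ^ k)⁻¹ x) m
  rw [h1] at h2
  rw [h2]
  exact (add_sub_cancel_right _ _).symm

/-- The subgroup of coordinatewise homeomorphisms. -/
def Cw : Subgroup (Xc ≃ₜ Xc) where
  carrier := {g | ∀ x y : Xc, ∀ m, x m = y m → g x m = g y m}
  one_mem' := fun _ _ _ h => h
  mul_mem' := fun {g h} hg hh x y m hxy => by
    rw [mul_apply, mul_apply]
    exact hg _ _ m (hh x y m hxy)
  inv_mem' := fun {g} hg x y m hxy => by
    have key : ∀ u v : Xc, g u m = g v m → u m = v m := by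
      intro u v huv
      classical
      set φ : E m → E m := fun c => g (Function.update u m c) m with hφ
      have hsurj : Function.Surjective φ := by
        intro d
        refine ⟨g.symm (Function.update (g u) m d) m, ?_⟩
        have h1 : g (g.symm (Function.update (g u) m d)) = Function.update (g u) m d :=
          g.apply_symm_apply _
        have h2 : φ (g.symm (Function.update (g u) m d) m) =
            g (g.symm (Function.update (g u) m d)) m := by
          apply hg
          simp
        rw [h2, h1]
        simp
      have hinj : Function.Injective φ := Finite.injective_iff_surjective.2 hsurj
      have e1 : φ (u m) = g u m := by
        apply hg
        simp
      have e2 : φ (v m) = g v m := by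
        apply hg
        simp
      exact hinj (by rw [e1, e2, huv])
    apply key
    rw [inv_coe] at *
    rw [g.apply_symm_apply, g.apply_symm_apply]
    exact hxy

lemma coord_inj {g : Xc ≃ₜ Xc} (hg : g ∈ Cw) {u v : Xc} {m : ℕ}
    (h : g u m = g v m) : u m = v m := by
  have := Cw.inv_mem hg
  have h2 : g⁻¹ (g u) m = g⁻¹ (g v) m := this _ _ m h
  rw [inv_coe, g.symm_apply_apply, g.symm_apply_apply] at h2
  exact h2

lemma firstDiff_eq {g : Xc ≃ₜ Xc} (hg : g ∈ Cw) {x y : Xc} (hxy : x ≠ y) :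
    PiNat.firstDiff (g x) (g y) = PiNat.firstDiff x y := by
  have hgxy : g x ≠ g y := fun h => hxy (g.injective h)
  apply le_antisymm
  · by_contra hlt
    push_neg at hlt
    have := PiNat.apply_eq_of_lt_firstDiff (x := g x) (y := g y) hlt
    exact PiNat.apply_firstDiff_ne hxy (coord_inj hg this)
  · by_contra hlt
    push_neg at hlt
    have := PiNat.apply_eq_of_lt_firstDiff (x := x) (y := y) hlt
    exact PiNat.apply_firstDiff_ne hgxy (hg _ _ _ this)

lemma dist_eq_of_mem {g : Xc ≃ₜ Xc} (hg : g ∈ Cw) (x y : Xc) :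
    dist (g x) (g y) = dist x y := by
  rcases eq_or_ne x y with rfl | hxy
  · simp
  · have hgxy : g x ≠ g y := fun h => hxy (g.injective h)
    rw [PiNat.dist_eq_of_ne hxy, PiNat.dist_eq_of_ne hgxy, firstDiff_eq hg hxy]

noncomputable def G : Subgroup (Xc ≃ₜ Xc) := Subgroup.closure {ha, hb}

lemma ha_mem : ha ∈ G := Subgroup.subset_closure (by simp)
lemma hb_mem : hb ∈ G := Subgroup.subset_closure (by simp)

lemma G_le_Cw : G ≤ Cw := by
  rw [G, Subgroup.closure_le]
  rintro g (rfl | rfl)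
  · intro x y m h
    rw [ha_apply, ha_apply, h]
  · intro x y m h
    rw [hb_apply, hb_apply, h]

lemma p_strictMono : StrictMono p := fun a b h =>
  (Nat.nth_lt_nth Nat.infinite_setOf_prime).2 (by omega)

lemma p_coprime {m m' : ℕ} (h : m ≠ m') : Nat.Coprime (p m) (p m') := by
  rw [Nat.coprime_primes (p_prime m) (p_prime m')]
  intro he
  rcases lt_or_gt_of_ne h with h' | h'
  · exact absurd he (p_strictMono h').ne
  · exact absurd he.symm (p_strictMono h').ne

lemma cast_ne {m : ℕ} {i j : ℕ} (hi : i < p m) (hj : j < p m) (hne : i ≠ j) :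
    ((i : ℕ) : E m) ≠ ((j : ℕ) : E m) := by
  intro h
  rw [ZMod.natCast_eq_natCast_iff, Nat.ModEq, Nat.mod_eq_of_lt hi, Nat.mod_eq_of_lt hj] at h
  exact hne h

lemma crt (t : ∀ m, E m) (n : ℕ) : ∃ k : ℕ, ∀ m, m < n → ((k : ℕ) : E m) = t m := by
  induction n with
  | zero => exact ⟨0, fun m hm => absurd hm (Nat.not_lt_zero m)⟩
  | succ n ih =>
    obtain ⟨k₀, hk₀⟩ := ih
    have hco : Nat.Coprime (∏ m ∈ Finset.range n, p m) (p n) := by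
      apply Nat.Coprime.prod_left
      intro m hm
      exact p_coprime (by simp at hm; omega)
    obtain ⟨k, hk1, hk2⟩ := Nat.chineseRemainder hco k₀ (t n).val
    refine ⟨k, fun m hm => ?_⟩
    rcases Nat.lt_succ_iff_lt_or_eq.1 hm with hm' | rfl
    · have hdvd : p m ∣ ∏ m ∈ Finset.range n, p m :=
        Finset.dvd_prod_of_mem _ (Finset.mem_range.2 hm')
      have : (k : E m) = (k₀ : E m) :=
        (ZMod.natCast_eq_natCast_iff _ _ _).2 (hk1.of_dvd hdvd)
      rw [this]
      exact hk₀ m hm'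
    · have : (k : E m) = ((t m).val : E m) :=
        (ZMod.natCast_eq_natCast_iff _ _ _).2 hk2
      rw [this, ZMod.natCast_rightInverse (t m)]


lemma dense_orbit (x : Xc) : Dense {y : Xc | ∃ g ∈ G, (g : Xc ≃ₜ Xc) x = y} := by
  rw [Metric.dense_iff]
  intro z r hr
  obtain ⟨n, hn⟩ : ∃ n : ℕ, (1 / 2 : ℝ) ^ n < r := exists_pow_lt_of_lt_one hr (by norm_num)
  obtain ⟨k, hk⟩ := crt (fun m => z m - x m) n
  refine ⟨(ha ^ k) x, ?_, ⟨ha ^ k, Subgroup.pow_mem _ ha_mem k, rfl⟩⟩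
  rw [Metric.mem_ball]
  have hcyl : (ha ^ k) x ∈ PiNat.cylinder z n := by
    rw [PiNat.mem_cylinder_iff]
    intro i hi
    rw [ha_pow_apply, hk i hi]
    ring
  exact lt_of_le_of_lt (PiNat.mem_cylinder_iff_dist_le.1 hcyl) hn

/-! ### The coordinate maps of the special elements -/

section Coord

variable {m : ℕ}

/-- the swap 0 1 -/
noncomputable def tau (m : ℕ) : E m → E m := fun v => Equiv.swap (0 : E m) (1 : E m) v

/-- conjugated swap -/
noncomputable def Cm (rb : E m) (v : E m) : E m := tau m (v - rb) + rb

noncomputable def gam (rb : E m) (v : E m) : E m := Cm rb (tau m (Cm rb (tau m v)))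

lemma tau_zero : tau m (0 : E m) = 1 := Equiv.swap_apply_left _ _
lemma tau_one : tau m (1 : E m) = 0 := Equiv.swap_apply_right _ _
lemma tau_fix {v : E m} (h0 : v ≠ 0) (h1 : v ≠ 1) : tau m v = v :=
  Equiv.swap_apply_of_ne_of_ne h0 h1

lemma Cm_fix {rb v : E m} (h1 : v ≠ rb) (h2 : v ≠ rb + 1) : Cm rb v = v := by
  have e0 : v - rb ≠ 0 := sub_ne_zero.2 h1
  have e1 : v - rb ≠ 1 := by
    intro h
    exact h2 (by rw [← h]; ring)
  rw [Cm, tau_fix e0 e1]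
  ring

lemma Cm_r {rb : E m} : Cm rb rb = rb + 1 := by
  rw [Cm, sub_self, tau_zero]; ring

lemma Cm_r1 {rb : E m} : Cm rb (rb + 1) = rb := by
  rw [Cm, add_sub_cancel_left, tau_one]; ring

/-- numeral distinctness helpers -/
lemma two_ne_zero' : ((2 : ℕ) : E m) ≠ ((0 : ℕ) : E m) :=
  cast_ne (by have := p_ge5 m; omega) (by have := p_ge5 m; omega) (by norm_num)
lemma two_ne_one' : ((2 : ℕ) : E m) ≠ ((1 : ℕ) : E m) :=
  cast_ne (by have := p_ge5 m; omega) (by have := p_ge5 m; omega) (by norm_num)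
lemma three_ne_zero' : ((3 : ℕ) : E m) ≠ ((0 : ℕ) : E m) :=
  cast_ne (by have := p_ge5 m; omega) (by have := p_ge5 m; omega) (by norm_num)
lemma three_ne_one' : ((3 : ℕ) : E m) ≠ ((1 : ℕ) : E m) :=
  cast_ne (by have := p_ge5 m; omega) (by have := p_ge5 m; omega) (by norm_num)
lemma four_ne_zero' : ((4 : ℕ) : E m) ≠ ((0 : ℕ) : E m) :=
  cast_ne (by have := p_ge5 m; omega) (by have := p_ge5 m; omega) (by norm_num)
lemma four_ne_one' : ((4 : ℕ) : E m) ≠ ((1 : ℕ) : E m) :=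
  cast_ne (by have := p_ge5 m; omega) (by have := p_ge5 m; omega) (by norm_num)
lemma three_ne_two' : ((3 : ℕ) : E m) ≠ ((2 : ℕ) : E m) :=
  cast_ne (by have := p_ge5 m; omega) (by have := p_ge5 m; omega) (by norm_num)

lemma two_ne_zero'' : (2 : E m) ≠ 0 := by
  have := two_ne_zero' (m := m); push_cast at this; exact this
lemma two_ne_one'' : (2 : E m) ≠ 1 := by
  have := two_ne_one' (m := m); push_cast at this; exact this
lemma three_ne_zero'' : (3 : E m) ≠ 0 := by
  have := three_ne_zero' (m := m); push_cast at this; exact this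
lemma three_ne_one'' : (3 : E m) ≠ 1 := by
  have := three_ne_one' (m := m); push_cast at this; exact this
lemma four_ne_zero'' : (4 : E m) ≠ 0 := by
  have := four_ne_zero' (m := m); push_cast at this; exact this
lemma four_ne_one'' : (4 : E m) ≠ 1 := by
  have := four_ne_one' (m := m); push_cast at this; exact this
lemma three_ne_two'' : (3 : E m) ≠ 2 := by
  have := three_ne_two' (m := m); push_cast at this; exact this

lemma gam_three (rb : E m) : gam rb (3 : E m) = 3 := by
  by_cases hr2 : rb = 2
  · subst hr2
    have h3 : (3 : E m) = (2 : E m) + 1 := by norm_num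
    rw [gam, tau_fix three_ne_zero'' three_ne_one'', h3, Cm_r1,
      tau_fix two_ne_zero'' two_ne_one'', Cm_r, ← h3]
  · by_cases hr3 : rb = 3
    · subst hr3
      rw [gam, tau_fix three_ne_zero'' three_ne_one'', Cm_r]
      have h4 : (3 : E m) + 1 = 4 := by norm_num
      rw [h4, tau_fix four_ne_zero'' four_ne_one'', ← h4, Cm_r1]
    · have hne1 : (3 : E m) ≠ rb := fun h => hr3 h.symm
      have hne2 : (3 : E m) ≠ rb + 1 := by
        intro h
        apply hr2
        have : rb = 3 - 1 := by rw [h]; ring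
        rw [this]; norm_num
      rw [gam, tau_fix three_ne_zero'' three_ne_one'', Cm_fix hne1 hne2,
        tau_fix three_ne_zero'' three_ne_one'', Cm_fix hne1 hne2]

lemma gam_id {rb : E m} (h0 : rb ≠ 0) (h1 : rb ≠ 1) (hm1 : rb + 1 ≠ 0) (v : E m) :
    gam rb v = v := by
  have hr1 : rb + 1 ≠ 1 := by
    intro h; exact h0 (by simpa using h)
  have c0 : Cm rb (0 : E m) = 0 := Cm_fix (fun h => h0 h.symm) (fun h => hm1 h.symm)
  have c1 : Cm rb (1 : E m) = 1 := Cm_fix (fun h => h1 h.symm) (fun h => hr1 h.symm)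
  by_cases hv0 : v = 0
  · subst hv0
    rw [gam, tau_zero, c1, tau_one, c0]
  · by_cases hv1 : v = 1
    · subst hv1
      rw [gam, tau_one, c0, tau_zero, c1]
    · rw [gam, tau_fix hv0 hv1]
      by_cases hvr : v = rb
      · subst hvr
        rw [Cm_r, tau_fix hm1 hr1, Cm_r1]
      · by_cases hvr1 : v = rb + 1
        · subst hvr1
          rw [Cm_r1, tau_fix h0 h1, Cm_r]
        · rw [Cm_fix hvr hvr1, tau_fix hv0 hv1, Cm_fix hvr hvr1]

lemma gam_move {rb : E m} (hr : rb = 1) : gam rb (0 : E m) = 1 := by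
  subst hr
  have h2 : (1 : E m) + 1 = 2 := by norm_num
  rw [gam, tau_zero, Cm_r, h2, tau_fix two_ne_zero'' two_ne_one'', ← h2, Cm_r1]

end Coord

/-! ### The special elements -/

noncomputable def wel (r : ℕ) : Xc ≃ₜ Xc :=
  (ha ^ r * hb * (ha ^ r)⁻¹) * hb * (ha ^ r * hb * (ha ^ r)⁻¹) * hb

lemma wel_mem (r : ℕ) : wel r ∈ G := by
  have h1 : ha ^ r ∈ G := Subgroup.pow_mem _ ha_mem r
  exact mul_mem (mul_mem (mul_mem (mul_mem (mul_mem h1 hb_mem) (inv_mem h1)) hb_mem)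
    (mul_mem (mul_mem h1 hb_mem) (inv_mem h1))) hb_mem

lemma conj_apply (r : ℕ) (x : Xc) (m : ℕ) :
    (ha ^ r * hb * (ha ^ r)⁻¹) x m = Cm ((r : ℕ) : E m) (x m) := by
  rw [mul_apply, mul_apply, ha_pow_apply, hb_apply, Cm, tau]
  congr 1
  rw [ha_pow_inv_apply]

lemma wel_apply (r : ℕ) (x : Xc) (m : ℕ) : wel r x m = gam ((r : ℕ) : E m) (x m) := by
  rw [wel, mul_apply, mul_apply, mul_apply, conj_apply, hb_apply, conj_apply, hb_apply]
  rfl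

/-! ### non-LQA -/

lemma not_lqa : ¬ IsLocallyQuasiAnalytic ((fun g : Xc ≃ₜ Xc => ⇑g) '' (G : Set (Xc ≃ₜ Xc))) := by
  rintro ⟨ε, hε, H⟩
  obtain ⟨n, hn⟩ : ∃ n : ℕ, (1 / 2 : ℝ) ^ n < ε := exists_pow_lt_of_lt_one hε (by norm_num)
  obtain ⟨r, hr⟩ : ∃ r, r = p n + 1 := ⟨_, rfl⟩
  obtain ⟨M, hM⟩ : ∃ M, M = r + 2 := ⟨_, rfl⟩
  set x3 : Xc := fun m => ((3 : ℕ) : E m) with hx3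
  set U := PiNat.cylinder x3 n with hU
  set V := PiNat.cylinder x3 (M + 1) with hV
  have hdiam : Metric.diam U ≤ (1 / 2 : ℝ) ^ n := by
    apply Metric.diam_le_of_forall_dist_le (by positivity)
    intro x hx y hy
    have : x ∈ PiNat.cylinder y n := by
      rw [PiNat.mem_cylinder_iff]
      intro i hi
      rw [PiNat.mem_cylinder_iff.1 hx i hi, PiNat.mem_cylinder_iff.1 hy i hi]
    exact PiNat.mem_cylinder_iff_dist_le.1 this
  have hsub : V ⊆ U := PiNat.cylinder_anti x3 (by have := p_lb n; omega)
  have hEqV : Set.EqOn (⇑(wel r)) (⇑(1 : Xc ≃ₜ Xc)) V := by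
    intro x hx
    rw [one_apply]
    funext m
    rw [wel_apply]
    rcases le_or_gt m M with hm | hm
    · rw [PiNat.mem_cylinder_iff.1 hx m (by omega)]
      show gam _ (((3 : ℕ) : E m)) = (((3 : ℕ) : E m))
      have h3 : ((3 : ℕ) : E m) = (3 : E m) := by push_cast; ring
      rw [h3]
      exact gam_three _
    · have hpn5 := p_ge5 n
      have hpm : r + 1 < p m := by
        have h1 := p_lb m
        omega
      have h0 : ((r : ℕ) : E m) ≠ 0 := by
        have := cast_ne (m := m) (i := r) (j := 0) (by omega) (by omega) (by omega)
        push_cast at this ⊢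
        exact this
      have h1 : ((r : ℕ) : E m) ≠ 1 := by
        have := cast_ne (m := m) (i := r) (j := 1) (by omega) (by omega) (by omega)
        push_cast at this ⊢
        exact this
      have hm1 : ((r : ℕ) : E m) + 1 ≠ 0 := by
        have := cast_ne (m := m) (i := r + 1) (j := 0) (by omega) (by omega) (by omega)
        push_cast at this ⊢
        exact this
      exact gam_id h0 h1 hm1 _
  have hNe : ¬ Set.EqOn (⇑(wel r)) (⇑(1 : Xc ≃ₜ Xc)) U := by
    classical
    intro hEq
    set xs : Xc := fun m => if m = n then (0 : E m) else ((3 : ℕ) : E m) with hxs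
    have hxsU : xs ∈ U := by
      rw [hU, PiNat.mem_cylinder_iff]
      intro i hi
      simp only [hxs]
      rw [if_neg (by omega)]
    have heq := hEq hxsU
    rw [one_apply] at heq
    have hco := congrFun heq n
    rw [wel_apply] at hco
    have hxn : xs n = 0 := by simp [hxs]
    have hrb : ((r : ℕ) : E n) = 1 := by
      rw [hr]
      push_cast
      rw [ZMod.natCast_self]
      ring
    rw [hxn, gam_move hrb] at hco
    exact one_ne_zero hco
  exact hNe (H U (PiNat.isOpen_cylinder _ _ _) (lt_of_le_of_lt hdiam hn)
    (⇑(wel r)) ⟨wel r, wel_mem r, rfl⟩ (⇑(1 : Xc ≃ₜ Xc)) ⟨1, one_mem _, rfl⟩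
    V hsub (PiNat.isOpen_cylinder _ _ _) ⟨x3, PiNat.self_mem_cylinder _ _⟩ hEqV)

/-! ### no non-Hausdorff elements -/

lemma no_nh : ∀ g ∈ G, ¬ IsNonHausdorffElement (⇑(g : Xc ≃ₜ Xc)) := by
  rintro g hgG ⟨x, hfix, hW1, hW2⟩
  have hg := G_le_Cw hgG
  obtain ⟨O, hO, ⟨z, hz⟩, -, hOid⟩ := hW2 univ isOpen_univ (mem_univ x)
  obtain ⟨ρ, hρ, hball⟩ := Metric.isOpen_iff.1 hO z hz
  obtain ⟨n, hn⟩ : ∃ n : ℕ, (1 / 2 : ℝ) ^ n < ρ := exists_pow_lt_of_lt_one hρ (by norm_num)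
  have claim : ∀ m, n < m → ∀ u : Xc, g u m = u m := by
    intro m hm u
    classical
    set z' := Function.update z m (u m) with hz'
    have hz'O : z' ∈ O := by
      apply hball
      rw [Metric.mem_ball]
      have : z' ∈ PiNat.cylinder z n := by
        rw [PiNat.mem_cylinder_iff]
        intro i hi
        rw [hz', Function.update_of_ne (by omega)]
      exact lt_of_le_of_lt (PiNat.mem_cylinder_iff_dist_le.1 this) hn
    have hfix' : g z' = z' := hOid hz'O
    have e1 : g u m = g z' m := hg u z' m (by simp [hz'])
    rw [e1, hfix']
    simp [hz']
  apply hW1 (PiNat.cylinder x (n + 1)) (PiNat.isOpen_cylinder _ _ _)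
    (PiNat.self_mem_cylinder _ _)
  intro u hu
  show g u = u
  funext m
  rcases lt_or_ge m (n + 1) with hm | hm
  · have h1 : u m = x m := PiNat.mem_cylinder_iff.1 hu m hm
    have h2 : g u m = g x m := hg u x m h1
    rw [h2]
    rw [show (⇑g) x = x from hfix, ← h1]
  · exact claim m (by omega) u

/-! ### Perfect -/

lemma perfect_univ : Perfect (univ : Set Xc) := by
  constructor
  · exact isClosed_univ
  · rw [preperfect_iff_nhds]
    intro x _ U hU
    obtain ⟨ρ, hρ, hball⟩ := Metric.mem_nhds_iff.1 hU
    obtain ⟨n, hn⟩ : ∃ n : ℕ, (1 / 2 : ℝ) ^ n < ρ := exists_pow_lt_of_lt_one hρ (by norm_num)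
    classical
    refine ⟨Function.update x n (x n + 1), ⟨hball ?_, mem_univ _⟩, ?_⟩
    · rw [Metric.mem_ball]
      have : Function.update x n (x n + 1) ∈ PiNat.cylinder x n := by
        rw [PiNat.mem_cylinder_iff]
        intro i hi
        rw [Function.update_of_ne (by omega)]
      exact lt_of_le_of_lt (PiNat.mem_cylinder_iff_dist_le.1 this) hn
    · intro h
      have := congrFun h n
      rw [Function.update_self] at this
      have h1 : (1 : E n) = 0 := by
        have := sub_eq_zero.2 this
        rw [add_sub_cancel_left] at this
        exact this
      exact one_ne_zero h1

lemma G_fg : G.FG := by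
  classical
  exact ⟨({ha, hb} : Finset (Xc ≃ₜ Xc)), by simp [G]⟩

end S19

/-- There exist a Cantor set `X` and a finitely generated subgroup `G` of the
homeomorphism group of `X`, acting minimally and equicontinuously on `X`, such that the
action of `G` is not locally quasi-analytic and `G` contains no non-Hausdorff elements. -/
theorem stmt19 :
    ∃ (X : Type) (_ : MetricSpace X),
      CompactSpace X ∧ TotallyDisconnectedSpace X ∧ Nonempty X ∧
      Perfect (Set.univ : Set X) ∧
      ∃ G : Subgroup (X ≃ₜ X),
        G.FG ∧
        (∀ x : X, Dense {y : X | ∃ g ∈ G, (g : X ≃ₜ X) x = y}) ∧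
        (∀ ε > (0 : ℝ), ∃ δ > (0 : ℝ), ∀ g ∈ G, ∀ x y : X, dist x y < δ →
          dist ((g : X ≃ₜ X) x) ((g : X ≃ₜ X) y) < ε) ∧
        ¬ IsLocallyQuasiAnalytic ((fun g : X ≃ₜ X => ⇑g) '' (G : Set (X ≃ₜ X))) ∧
        ∀ g ∈ G, ¬ IsNonHausdorffElement (⇑(g : X ≃ₜ X)) := by
  refine ⟨S19.Xc, S19.metricXc,
    (by infer_instance : CompactSpace (∀ m, S19.E m)),
    (by infer_instance : TotallyDisconnectedSpace (∀ m, S19.E m)),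
    ⟨fun _ => 0⟩, S19.perfect_univ, S19.G, S19.G_fg, S19.dense_orbit, ?_, S19.not_lqa, S19.no_nh⟩
  intro ε hε
  exact ⟨ε, hε, fun g hg x y h => by
    rw [S19.dist_eq_of_mem (S19.G_le_Cw hg)]; exact h⟩
end
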